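/- arXiv:1509.03050 — 5 statements merged into one kernel-verified Lean document; each statement's English description precedes it below -/
import Mathlib

section
/- Let X : U → ℝ³ be a frontal with a non-degenerate singular point p = (0,0) of the first kind, and suppose the coordinates (u,v) are chosen so that the singular set of X near p equals {u = 0} and X_u = 0 on {u = 0} (so ξ := ∂_v extends the singular direction and ∂_u is null along the singular curve). Set a := −(X_v·X_{uu})/(X_v·X_v)(0,0) and b := −(X_v·(X_{uuu} + 3a X_{uv}))/(2 X_v·X_v)(0,0). Then the vector field η̃ := ∂_u + (a u + b u²)∂_v equals ∂_u on {u = 0} (hence is null along the singular curve) and satisfies (X_v · η̃²X)(0,0) = (X_v · η̃³X)(0,0) = 0. -/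
noncomputable section

open Set

/-- Euclidean inner product on `ℝ³`. -/
def dot3 (a b : Fin 3 → ℝ) : ℝ := a 0 * b 0 + a 1 * b 1 + a 2 * b 2

/-- Determinant of the 3×3 matrix with the given rows. -/
def det3 (a b c : Fin 3 → ℝ) : ℝ := Matrix.det (Matrix.of ![a, b, c])

/-- Partial derivative with respect to the first variable. -/
def pdU (X : ℝ × ℝ → Fin 3 → ℝ) (p : ℝ × ℝ) : Fin 3 → ℝ := fderiv ℝ X p ((1:ℝ), (0:ℝ))

/-- Partial derivative with respect to the second variable. -/
def pdV (X : ℝ × ℝ → Fin 3 → ℝ) (p : ℝ × ℝ) : Fin 3 → ℝ := fderiv ℝ X p ((0:ℝ), (1:ℝ))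

/-- Directional derivative of `X` along the vector field `ζ`. -/
def vfD (ζ : ℝ × ℝ → ℝ × ℝ) (X : ℝ × ℝ → Fin 3 → ℝ) : ℝ × ℝ → Fin 3 → ℝ :=
  fun p => fderiv ℝ X p (ζ p)

/-- `k`-fold iterated directional derivative of `X` along the vector field `ζ`. -/
def vfDIter (ζ : ℝ × ℝ → ℝ × ℝ) (k : ℕ) (X : ℝ × ℝ → Fin 3 → ℝ) : ℝ × ℝ → Fin 3 → ℝ :=
  (vfD ζ)^[k] X

/-- `p` is a singular point of `X` : the differential has rank < 2, i.e. the two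
partial derivative vectors are linearly dependent. -/
def IsSingularPt (X : ℝ × ℝ → Fin 3 → ℝ) (p : ℝ × ℝ) : Prop :=
  ¬ LinearIndependent ℝ ![pdU X p, pdV X p]

/-- `f` is a diffeomorphism from the open set `s` onto the open set `t`. -/
def IsDiffeoOn {E F : Type*} [NormedAddCommGroup E] [NormedSpace ℝ E]
    [NormedAddCommGroup F] [NormedSpace ℝ F] (f : E → F) (s : Set E) (t : Set F) : Prop :=
  IsOpen s ∧ IsOpen t ∧ ContDiffOn ℝ (⊤:ℕ∞) f s ∧ Set.BijOn f s t ∧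
    ∃ finv : F → E, ContDiffOn ℝ (⊤:ℕ∞) finv t ∧ (∀ x ∈ s, finv (f x) = x) ∧
      ∀ y ∈ t, f (finv y) = y

/-- `p` is a (2,5)-cuspidal edge of `X` (with domain `D`): up to diffeomorphisms of the
source (taking `0` to `p`, with image inside `D`) and of the target, `X` is
`(u,v) ↦ (u, v², v⁵)`. -/
def IsCuspidalEdge25 (D : Set (ℝ × ℝ)) (X : ℝ × ℝ → Fin 3 → ℝ) (p : ℝ × ℝ) : Prop :=
  ∃ (s t : Set (ℝ × ℝ)) (φ : ℝ × ℝ → ℝ × ℝ)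
    (s' t' : Set (Fin 3 → ℝ)) (Φ : (Fin 3 → ℝ) → (Fin 3 → ℝ)),
    ((0:ℝ), (0:ℝ)) ∈ s ∧ φ ((0:ℝ), (0:ℝ)) = p ∧ t ⊆ D ∧ IsDiffeoOn φ s t ∧
    X p ∈ s' ∧ IsDiffeoOn Φ s' t' ∧
    ∀ w ∈ s, X (φ w) ∈ s' ∧ Φ (X (φ w)) = ![w.1, w.2 ^ 2, w.2 ^ 5]

/-- `X` is a frontal on the open set `U` : it is smooth and locally admits a smooth unit
normal vector field orthogonal to both partial derivatives. -/
def IsFrontalOn (X : ℝ × ℝ → Fin 3 → ℝ) (U : Set (ℝ × ℝ)) : Prop :=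
  ContDiffOn ℝ (⊤:ℕ∞) X U ∧ ∀ q ∈ U, ∃ V, IsOpen V ∧ q ∈ V ∧ V ⊆ U ∧
    ∃ n : ℝ × ℝ → Fin 3 → ℝ, ContDiffOn ℝ (⊤:ℕ∞) n V ∧
      ∀ x ∈ V, dot3 (n x) (n x) = 1 ∧ dot3 (n x) (pdU X x) = 0 ∧ dot3 (n x) (pdV X x) = 0

/-- `p` is a non-degenerate singular point of `X` : it is singular and the signed area
density `λ = det(X_u, X_v, n)` (for a local unit normal `n`) has nonvanishing
differential at `p`. -/
def IsNondegSing (X : ℝ × ℝ → Fin 3 → ℝ) (U : Set (ℝ × ℝ)) (p : ℝ × ℝ) : Prop :=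
  IsSingularPt X p ∧ ∃ V, IsOpen V ∧ p ∈ V ∧ V ⊆ U ∧
    ∃ n : ℝ × ℝ → Fin 3 → ℝ, ContDiffOn ℝ (⊤:ℕ∞) n V ∧
      (∀ x ∈ V, dot3 (n x) (n x) = 1 ∧ dot3 (n x) (pdU X x) = 0 ∧
        dot3 (n x) (pdV X x) = 0) ∧
      fderiv ℝ (fun x => det3 (pdU X x) (pdV X x) (n x)) p ≠ 0

/-! Along a field `ζ = ∂_u + f(u) ∂_v` with `f 0 = 0`, the chain rule and the symmetry of second
derivatives give at the origin `ζ²X = X_uu + f'(0) X_v` and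
`ζ³X = X_uuu + 3 f'(0) X_uv + f''(0) X_v`. For `f u = a u + b u²` we have `f'(0) = a` and
`f''(0) = 2 b`, and the defining formulas for `a` and `b` are exactly the coefficients of `X_v`
that make these vectors orthogonal to `X_v`. -/

open Topology

theorem dot3_eq_dotProduct (v w : Fin 3 → ℝ) : dot3 v w = v ⬝ᵥ w := by
  simp [dot3, dotProduct, Fin.sum_univ_three]

theorem dot3_add_smul_eq_zero {v w : Fin 3 → ℝ} (hv : v ≠ 0) {c : ℝ}
    (hc : c = -dot3 v w / dot3 v v) : dot3 v (w + c • v) = 0 := by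
  have hvv : v ⬝ᵥ v ≠ 0 := fun h => hv (dotProduct_self_eq_zero.mp h)
  simp only [dot3_eq_dotProduct] at hc ⊢
  rw [dotProduct_add, dotProduct_smul, smul_eq_mul, hc]
  field_simp
  ring

theorem ContinuousLinearMap.apply_zero_prod {F : Type*} [NormedAddCommGroup F] [NormedSpace ℝ F]
    (L : ℝ × ℝ →L[ℝ] F) (d : ℝ) : L (0, d) = d • L (0, 1) := by
  rw [← map_smul]
  simp

section IteratedDerivatives

variable {X : ℝ × ℝ → Fin 3 → ℝ} {ξ ζ : ℝ × ℝ → ℝ × ℝ} {p : ℝ × ℝ}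

theorem vfD_vfD_apply (hX : DifferentiableAt ℝ (fderiv ℝ X) p)
    (hζ : DifferentiableAt ℝ ζ p) :
    vfD ξ (vfD ζ X) p =
      fderiv ℝ (fderiv ℝ X) p (ξ p) (ζ p) + fderiv ℝ X p (fderiv ℝ ζ p (ξ p)) := by
  change fderiv ℝ (fun q => fderiv ℝ X q (ζ q)) p (ξ p) = _
  rw [fderiv_clm_apply hX hζ]
  simp [add_comm]

theorem vfDIter_two_apply (hX : DifferentiableAt ℝ (fderiv ℝ X) p)
    (hζ : DifferentiableAt ℝ ζ p) :
    vfDIter ζ 2 X p =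
      fderiv ℝ (fderiv ℝ X) p (ζ p) (ζ p) + fderiv ℝ X p (fderiv ℝ ζ p (ζ p)) :=
  vfD_vfD_apply hX hζ

theorem vfDIter_three_apply (hX : ContDiffAt ℝ 3 X p) (hζ : ContDiffAt ℝ 2 ζ p) :
    vfDIter ζ 3 X p =
      fderiv ℝ (fderiv ℝ (fderiv ℝ X)) p (ζ p) (ζ p) (ζ p) +
        (3 : ℝ) • fderiv ℝ (fderiv ℝ X) p (ζ p) (fderiv ℝ ζ p (ζ p)) +
        fderiv ℝ X p (fderiv ℝ (fun q => fderiv ℝ ζ q (ζ q)) p (ζ p)) := by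
  have hDX : ∀ᶠ q in 𝓝 p, DifferentiableAt ℝ (fderiv ℝ X) q := by
    filter_upwards [hX.eventually (by simp)] with q hq
    exact (hq.fderiv_right (m := 2) (by norm_num)).differentiableAt two_ne_zero
  have hζ' : ∀ᶠ q in 𝓝 p, DifferentiableAt ℝ ζ q := by
    filter_upwards [hζ.eventually (by simp)] with q hq
    exact hq.differentiableAt two_ne_zero
  have hD2X : DifferentiableAt ℝ (fderiv ℝ (fderiv ℝ X)) p :=
    ((hX.fderiv_right (m := 2) (by norm_num)).fderiv_right (m := 1) (by norm_num)).differentiableAt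
      one_ne_zero
  have hDζ : DifferentiableAt ℝ (fderiv ℝ ζ) p :=
    (hζ.fderiv_right (m := 1) (by norm_num)).differentiableAt one_ne_zero
  have hsymm : IsSymmSndFDerivAt ℝ X p :=
    hX.isSymmSndFDerivAt (by rw [minSmoothness_of_isRCLikeNormedField]; norm_num)
  have hsecond : vfD ζ (vfD ζ X) =ᶠ[𝓝 p] fun q =>
      fderiv ℝ (fderiv ℝ X) q (ζ q) (ζ q) + fderiv ℝ X q (fderiv ℝ ζ q (ζ q)) := by
    filter_upwards [hDX, hζ'] with q hXq hζq using vfD_vfD_apply hXq hζq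
  have hζp := hζ'.self_of_nhds
  have hD2Xζ : DifferentiableAt ℝ (fun q => fderiv ℝ (fderiv ℝ X) q (ζ q)) p :=
    hD2X.clm_apply hζp
  have hDζζ : DifferentiableAt ℝ (fun q => fderiv ℝ ζ q (ζ q)) p := hDζ.clm_apply hζp
  change fderiv ℝ (vfD ζ (vfD ζ X)) p (ζ p) = _
  rw [hsecond.fderiv_eq,
    fderiv_fun_add (hD2Xζ.clm_apply hζp) (hDX.self_of_nhds.clm_apply hDζζ),
    fderiv_clm_apply hD2Xζ hζp, fderiv_clm_apply hD2X hζp,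
    fderiv_clm_apply hDX.self_of_nhds hDζζ]
  simp only [ContinuousLinearMap.flip_add, add_apply, ContinuousLinearMap.comp_apply,
    ContinuousLinearMap.flip_apply, hsymm.eq (fderiv ℝ ζ p (ζ p)) (ζ p)]
  module

end IteratedDerivatives

/-- The vector field `∂_u + f(u) ∂_v`. -/
def shearField (f : ℝ → ℝ) : ℝ × ℝ → ℝ × ℝ := fun q => (1, f q.1)

section ShearField

variable {f : ℝ → ℝ}

theorem fderiv_const_prod_comp_fst_apply (c : ℝ) {q : ℝ × ℝ} (hf : DifferentiableAt ℝ f q.1)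
    (v : ℝ × ℝ) :
    fderiv ℝ (fun q : ℝ × ℝ => (c, f q.1)) q v = (0, deriv f q.1 * v.1) := by
  have h : HasFDerivAt (fun q : ℝ × ℝ => (c, f q.1)) _ q := (hasFDerivAt_const c q).prodMk
    (hf.hasDerivAt.comp_hasFDerivAt q (hasFDerivAt_fst (p := q) (𝕜 := ℝ) (F := ℝ)))
  rw [h.fderiv]
  simp

theorem fderiv_shearField_apply (hf : Differentiable ℝ f) (q v : ℝ × ℝ) :
    fderiv ℝ (shearField f) q v = (0, deriv f q.1 * v.1) :=
  fderiv_const_prod_comp_fst_apply 1 (hf q.1) v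

theorem contDiff_shearField {n : WithTop ℕ∞} (hf : ContDiff ℝ n f) :
    ContDiff ℝ n (shearField f) :=
  contDiff_const.prodMk (hf.comp contDiff_fst)

variable {X : ℝ × ℝ → Fin 3 → ℝ} {p : ℝ × ℝ}

theorem vfDIter_shearField_two_apply (hX : DifferentiableAt ℝ (fderiv ℝ X) p)
    (hf : ContDiff ℝ 2 f) :
    vfDIter (shearField f) 2 X p =
      fderiv ℝ (fderiv ℝ X) p (shearField f p) (shearField f p) + deriv f p.1 • pdV X p := by
  rw [vfDIter_two_apply hX ((contDiff_shearField hf).differentiable two_ne_zero p),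
    fderiv_shearField_apply (hf.differentiable two_ne_zero),
    ContinuousLinearMap.apply_zero_prod]
  simp [shearField, pdV]

theorem vfDIter_shearField_three_apply (hX : ContDiffAt ℝ 3 X p) (hf : ContDiff ℝ 2 f) :
    vfDIter (shearField f) 3 X p =
      fderiv ℝ (fderiv ℝ (fderiv ℝ X)) p (shearField f p) (shearField f p) (shearField f p) +
        (3 * deriv f p.1) • fderiv ℝ (fderiv ℝ X) p (shearField f p) (0, 1) +
        deriv (deriv f) p.1 • pdV X p := by
  have hdf := hf.differentiable two_ne_zero
  have hacc : (fun q => fderiv ℝ (shearField f) q (shearField f q)) =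
      fun q => ((0 : ℝ), deriv f q.1) := by
    funext q
    simp [fderiv_shearField_apply hdf, shearField]
  rw [vfDIter_three_apply hX (contDiff_shearField hf).contDiffAt, hacc,
    fderiv_const_prod_comp_fst_apply 0 (hf.differentiable_deriv_two p.1),
    fderiv_shearField_apply hdf, (fderiv ℝ X p).apply_zero_prod,
    (fderiv ℝ (fderiv ℝ X) p _).apply_zero_prod]
  simp [shearField, pdV, smul_smul]

end ShearField

theorem special_null_field_formula_general
    (U : Set (ℝ × ℝ)) (hU : IsOpen U)
    (X : ℝ × ℝ → Fin 3 → ℝ) (hfr : IsFrontalOn X U)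
    (hp : ((0:ℝ), (0:ℝ)) ∈ U)
    -- p is of the first kind: ∂_u is the null direction, so rank dX_p = 1, i.e. X_v(0,0) ≠ 0
    (hXv : pdV X ((0:ℝ), (0:ℝ)) ≠ 0)
    (a b : ℝ)
    (ha : a = -(dot3 (pdV X ((0:ℝ), (0:ℝ)))
        (vfDIter (fun _ => ((1:ℝ), (0:ℝ))) 2 X ((0:ℝ), (0:ℝ)))) /
      dot3 (pdV X ((0:ℝ), (0:ℝ))) (pdV X ((0:ℝ), (0:ℝ))))
    (hb : b = -(dot3 (pdV X ((0:ℝ), (0:ℝ)))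
        (vfDIter (fun _ => ((1:ℝ), (0:ℝ))) 3 X ((0:ℝ), (0:ℝ)) +
          (3 * a) • vfD (fun _ => ((1:ℝ), (0:ℝ)))
            (vfD (fun _ => ((0:ℝ), (1:ℝ))) X) ((0:ℝ), (0:ℝ)))) /
      (2 * dot3 (pdV X ((0:ℝ), (0:ℝ))) (pdV X ((0:ℝ), (0:ℝ)))))
    (ηt : ℝ × ℝ → ℝ × ℝ)
    (hηt : ηt = fun q => ((1:ℝ), a * q.1 + b * q.1 ^ 2)) :
    (∀ q : ℝ × ℝ, q.1 = 0 → ηt q = ((1:ℝ), (0:ℝ))) ∧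
    dot3 (pdV X ((0:ℝ), (0:ℝ))) (vfDIter ηt 2 X ((0:ℝ), (0:ℝ))) = 0 ∧
    dot3 (pdV X ((0:ℝ), (0:ℝ))) (vfDIter ηt 3 X ((0:ℝ), (0:ℝ))) = 0 := by
  set f : ℝ → ℝ := fun u => a * u + b * u ^ 2
  obtain rfl : ηt = shearField f := hηt
  have hf : ContDiff ℝ 2 f := by fun_prop
  have hf' : deriv f = fun u => a + 2 * b * u := by
    funext u
    rw [deriv_fun_add (by fun_prop) (by fun_prop), deriv_const_mul _ (by fun_prop),
      deriv_const_mul _ (by fun_prop)]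
    simp only [deriv_id'', mul_one, deriv_pow_field]
    ring
  have hf0 : shearField f (0, 0) = (1, 0) := by simp [shearField, f]
  have hX : ContDiffAt ℝ 3 X (0, 0) :=
    (hfr.1.contDiffAt (hU.mem_nhds hp)).of_le (WithTop.coe_le_coe.mpr le_top)
  have hDX : DifferentiableAt ℝ (fderiv ℝ X) (0, 0) :=
    (hX.fderiv_right (m := 2) (by norm_num)).differentiableAt two_ne_zero
  have hpartial_u : (fun _ : ℝ × ℝ => ((1 : ℝ), (0 : ℝ))) = shearField 0 := rfl
  rw [hpartial_u, vfDIter_shearField_two_apply (f := 0) hDX contDiff_const] at ha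
  rw [hpartial_u, vfDIter_shearField_three_apply (f := 0) hX contDiff_const,
    vfD_vfD_apply hDX (differentiableAt_const _)] at hb
  simp only [shearField, deriv_zero, Pi.zero_apply, mul_zero, zero_smul, add_zero,
    fderiv_fun_const, zero_apply, map_zero] at ha hb
  refine ⟨fun q hq => by simp [shearField, f, hq], ?_, ?_⟩
  · rw [vfDIter_shearField_two_apply hDX hf, hf0]
    simpa [hf'] using dot3_add_smul_eq_zero hXv ha
  · rw [vfDIter_shearField_three_apply hX hf, hf0]
    simpa [hf'] using dot3_add_smul_eq_zero hXv (c := 2 * b) (by rw [hb]; ring)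

/-- In adapted coordinates (singular set `{u = 0}`, `X_u = 0` there), the explicit vector
field `η̃ = ∂_u + (au + bu²)∂_v` is null along the singular curve and satisfies the
normalization conditions `(X_v·η̃²X)(0,0) = (X_v·η̃³X)(0,0) = 0`. -/
theorem special_null_field_formula
    (U : Set (ℝ × ℝ)) (hU : IsOpen U)
    (X : ℝ × ℝ → Fin 3 → ℝ) (hfr : IsFrontalOn X U)
    (hp : ((0:ℝ), (0:ℝ)) ∈ U)
    (hnd : IsNondegSing X U ((0:ℝ), (0:ℝ)))
    -- the singular set of X near p = (0,0) equals {u = 0}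
    (hsingset : ∃ V, IsOpen V ∧ ((0:ℝ), (0:ℝ)) ∈ V ∧ V ⊆ U ∧
      ∀ q ∈ V, (IsSingularPt X q ↔ q.1 = 0))
    -- X_u = 0 on {u = 0}
    (hXu : ∀ q ∈ U, q.1 = 0 → pdU X q = 0)
    -- p is of the first kind: ∂_u is the null direction, so rank dX_p = 1, i.e. X_v(0,0) ≠ 0
    (hXv : pdV X ((0:ℝ), (0:ℝ)) ≠ 0)
    (a b : ℝ)
    (ha : a = -(dot3 (pdV X ((0:ℝ), (0:ℝ)))
        (vfDIter (fun _ => ((1:ℝ), (0:ℝ))) 2 X ((0:ℝ), (0:ℝ)))) /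
      dot3 (pdV X ((0:ℝ), (0:ℝ))) (pdV X ((0:ℝ), (0:ℝ))))
    (hb : b = -(dot3 (pdV X ((0:ℝ), (0:ℝ)))
        (vfDIter (fun _ => ((1:ℝ), (0:ℝ))) 3 X ((0:ℝ), (0:ℝ)) +
          (3 * a) • vfD (fun _ => ((1:ℝ), (0:ℝ)))
            (vfD (fun _ => ((0:ℝ), (1:ℝ))) X) ((0:ℝ), (0:ℝ)))) /
      (2 * dot3 (pdV X ((0:ℝ), (0:ℝ))) (pdV X ((0:ℝ), (0:ℝ)))))
    (ηt : ℝ × ℝ → ℝ × ℝ)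
    (hηt : ηt = fun q => ((1:ℝ), a * q.1 + b * q.1 ^ 2)) :
    (∀ q : ℝ × ℝ, q.1 = 0 → ηt q = ((1:ℝ), (0:ℝ))) ∧
    dot3 (pdV X ((0:ℝ), (0:ℝ))) (vfDIter ηt 2 X ((0:ℝ), (0:ℝ))) = 0 ∧
    dot3 (pdV X ((0:ℝ), (0:ℝ))) (vfDIter ηt 3 X ((0:ℝ), (0:ℝ))) = 0 :=
  special_null_field_formula_general U hU X hfr hp hXv a b ha hb ηt hηt
end
end

section
/- Let X : U → ℝ³ be a frontal, p a non-degenerate singular point of the first kind, γ(t) (|t| < ε) the singular curve through p, and ξ, η extensions of γ' and of a null vector field along γ. Let ξ̄ = a₁ξ + a₂η and η̄ = b₁ξ + b₂η, where a₁, a₂, b₁, b₂ are smooth functions such that a₂ = b₁ = 0 on the singular set and a₁, b₂ are nowhere zero on the singular set. Then det(ξX, η²X, η³X)(γ(t)) = 0 for all |t| < ε if and only if det(ξ̄X, η̄²X, η̄³X)(γ(t)) = 0 for all |t| < ε. -/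
noncomputable section

open Set

/-!
Along the singular curve the null field satisfies `ηX = 0`, and since `ξ` is tangent to the
curve also `ξ(ηX) = 0`. There `b₁ = 0`, so `η̄ = b₂ η` and `ξ̄ = a₁ ξ`, and the Leibniz rule gives
`η̄²X ≡ b₂² η²X (mod ξX)` and `η̄³X ≡ b₂³ η³X (mod ξX, η²X)`. The only term not visibly of this
shape is `η(ξX)`; it equals `-dX[ξ, η]`, and `dX` has rank at most one on the curve, so it is a
multiple of `ξX`. Hence the two determinants differ by the nowhere-vanishing factor `a₁ b₂⁵`.
-/

open scoped ContDiff

theorem LinearMap.apply_mem_span_singleton_of_apply_eq_zero {K V W : Type*} [Field K]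
    [AddCommGroup V] [Module K V] [FiniteDimensional K V] [AddCommGroup W] [Module K W]
    (hV : Module.finrank K V ≤ 2) (T : V →ₗ[K] W) {k e : V} (hk : k ≠ 0) (hTk : T k = 0)
    (hTe : T e ≠ 0) (w : V) : T w ∈ K ∙ T e := by
  have hker : 1 ≤ Module.finrank K (LinearMap.ker T) :=
    calc 1 = Module.finrank K (K ∙ k) := (finrank_span_singleton hk).symm
      _ ≤ _ := Submodule.finrank_mono ((Submodule.span_singleton_le_iff_mem _ _).2 hTk)
  have hrange : Module.finrank K (LinearMap.range T) ≤ Module.finrank K (K ∙ T e) := by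
    rw [finrank_span_singleton hTe]
    have := T.finrank_range_add_finrank_ker
    omega
  have hspan : K ∙ T e = LinearMap.range T :=
    Submodule.eq_of_le_of_finrank_le
      ((Submodule.span_singleton_le_iff_mem _ _).2 (LinearMap.mem_range_self T e)) hrange
  exact hspan ▸ LinearMap.mem_range_self T w

theorem det3_smul_triangular (a b c : Fin 3 → ℝ) (x p y q r z : ℝ) :
    det3 (x • a) (p • a + y • b) (q • a + r • b + z • c) = x * y * z * det3 a b c := by
  simp only [det3, Matrix.det_fin_three, Matrix.of_apply, Matrix.cons_val, Pi.add_apply,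
    Pi.smul_apply, smul_eq_mul]
  ring

theorem det3_zero_left (b c : Fin 3 → ℝ) : det3 0 b c = 0 := by
  simp [det3, Matrix.det_fin_three]

theorem ContDiffOn.differentiableAt_of_isOpen {E F : Type*} [NormedAddCommGroup E]
    [NormedSpace ℝ E] [NormedAddCommGroup F] [NormedSpace ℝ F] {f : E → F} {U : Set E}
    (hf : ContDiffOn ℝ ∞ f U) (hU : IsOpen U) {q : E} (hq : q ∈ U) :
    DifferentiableAt ℝ f q :=
  (hf.contDiffAt (hU.mem_nhds hq)).differentiableAt (by simp)

section vfD

variable {ζ ξ η : ℝ × ℝ → ℝ × ℝ} {Y Z : ℝ × ℝ → Fin 3 → ℝ} {f g : ℝ × ℝ → ℝ} {q : ℝ × ℝ}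

theorem vfD_eq_smul_add_smul (h : ∀ q, ζ q = f q • ξ q + g q • η q) :
    vfD ζ Y = fun q => f q • vfD ξ Y q + g q • vfD η Y q := by
  funext q
  simp [vfD, h]

theorem vfDIter_two : vfDIter ζ 2 Y = vfD ζ (vfD ζ Y) := rfl

theorem vfDIter_three : vfDIter ζ 3 Y = vfD ζ (vfD ζ (vfD ζ Y)) := rfl

theorem vfD_apply_of_eq_smul {c : ℝ} (h : ζ q = c • ξ q) : vfD ζ Y q = c • vfD ξ Y q := by
  simp [vfD, h]

theorem vfD_add_apply (hY : DifferentiableAt ℝ Y q) (hZ : DifferentiableAt ℝ Z q) :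
    vfD ζ (fun q => Y q + Z q) q = vfD ζ Y q + vfD ζ Z q := by
  simp [vfD, fderiv_fun_add hY hZ]

theorem vfD_smul_apply (hf : DifferentiableAt ℝ f q) (hY : DifferentiableAt ℝ Y q) :
    vfD ζ (fun q => f q • Y q) q = fderiv ℝ f q (ζ q) • Y q + f q • vfD ζ Y q := by
  simp [vfD, fderiv_fun_smul hf hY, add_comm]

theorem vfD_congr_of_eqOn {U : Set (ℝ × ℝ)} (hU : IsOpen U) (h : Set.EqOn Y Z U) (hq : q ∈ U) :
    vfD ζ Y q = vfD ζ Z q := by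
  simp only [vfD, (Filter.eventuallyEq_of_mem (hU.mem_nhds hq) h).fderiv_eq]

theorem ContDiffOn.vfD {U : Set (ℝ × ℝ)} (hU : IsOpen U) (hY : ContDiffOn ℝ ∞ Y U)
    (hζ : ContDiffOn ℝ ∞ ζ U) : ContDiffOn ℝ ∞ (vfD ζ Y) U :=
  (hY.fderiv_of_isOpen hU (by simp)).clm_apply hζ

theorem vfD_eq_zero_of_comp_eventually_eq_zero {γ : ℝ → ℝ × ℝ} {s : ℝ}
    (hY : DifferentiableAt ℝ Y (γ s)) (hγ : DifferentiableAt ℝ γ s) (hζ : ζ (γ s) = deriv γ s)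
    (h0 : Y ∘ γ =ᶠ[nhds s] fun _ => 0) : vfD ζ Y (γ s) = 0 := by
  rw [vfD, hζ, ← fderiv_comp_deriv s hY hγ, h0.deriv_eq, deriv_const]

theorem vfD_vfD_sub_vfD_vfD {U : Set (ℝ × ℝ)} (hU : IsOpen U) (hY : ContDiffOn ℝ ∞ Y U)
    (hξ : DifferentiableAt ℝ ξ q) (hη : DifferentiableAt ℝ η q) (hq : q ∈ U) :
    vfD ξ (vfD η Y) q - vfD η (vfD ξ Y) q = fderiv ℝ Y q (VectorField.lieBracket ℝ ξ η q) :=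
  (VectorField.fderiv_apply_lieBracket (hY.contDiffAt (hU.mem_nhds hq))
    (by simp; exact ENat.LEInfty.out) hη hξ).symm

end vfD

section ChangeOfField

variable {U : Set (ℝ × ℝ)} {ζ ξ η : ℝ × ℝ → ℝ × ℝ} {X Y : ℝ × ℝ → Fin 3 → ℝ}
  {b₁ b₂ : ℝ × ℝ → ℝ} {q : ℝ × ℝ}

theorem vfD_vfD_of_eq_smul_add_smul (hζ : ∀ q, ζ q = b₁ q • ξ q + b₂ q • η q)
    (hb₁ : DifferentiableAt ℝ b₁ q) (hb₂ : DifferentiableAt ℝ b₂ q)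
    (hξY : DifferentiableAt ℝ (vfD ξ Y) q) (hηY : DifferentiableAt ℝ (vfD η Y) q) :
    vfD ζ (vfD ζ Y) q =
      (fderiv ℝ b₁ q (ζ q) • vfD ξ Y q + b₁ q • vfD ζ (vfD ξ Y) q) +
        (fderiv ℝ b₂ q (ζ q) • vfD η Y q + b₂ q • vfD ζ (vfD η Y) q) := by
  rw [vfD_eq_smul_add_smul (Y := Y) hζ, vfD_add_apply (hb₁.fun_smul hξY) (hb₂.fun_smul hηY),
    vfD_smul_apply hb₁ hξY, vfD_smul_apply hb₂ hηY]

theorem vfDIter_two_apply_of_eq_smul_add_smul (hζ : ∀ q, ζ q = b₁ q • ξ q + b₂ q • η q)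
    (hb₁ : DifferentiableAt ℝ b₁ q) (hb₂ : DifferentiableAt ℝ b₂ q)
    (hξX : DifferentiableAt ℝ (vfD ξ X) q) (hηX : DifferentiableAt ℝ (vfD η X) q)
    (hb₁q : b₁ q = 0) (hnull : vfD η X q = 0) :
    vfDIter ζ 2 X q = fderiv ℝ b₁ q (ζ q) • vfD ξ X q + b₂ q ^ 2 • vfDIter η 2 X q := by
  have hζq : ζ q = b₂ q • η q := by simp [hζ, hb₁q]
  rw [vfDIter_two, vfDIter_two, vfD_vfD_of_eq_smul_add_smul hζ hb₁ hb₂ hξX hηX, hb₁q, hnull,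
    vfD_apply_of_eq_smul hζq (Y := vfD η X)]
  module

theorem vfDIter_three_apply_of_eq_smul_add_smul (hU : IsOpen U) (hX : ContDiffOn ℝ ∞ X U)
    (hξ : ContDiffOn ℝ ∞ ξ U) (hη : ContDiffOn ℝ ∞ η U)
    (hb₁ : ContDiffOn ℝ ∞ b₁ U) (hb₂ : ContDiffOn ℝ ∞ b₂ U)
    (hζ : ∀ q, ζ q = b₁ q • ξ q + b₂ q • η q) (hq : q ∈ U) (hb₁q : b₁ q = 0)
    (hnull : vfD η X q = 0) (hnull' : vfD ξ (vfD η X) q = 0) {μ : ℝ}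
    (hμ : vfD η (vfD ξ X) q = μ • vfD ξ X q) :
    ∃ c d : ℝ, vfDIter ζ 3 X q =
      c • vfD ξ X q + d • vfDIter η 2 X q + b₂ q ^ 3 • vfDIter η 3 X q := by
  have hζsm : ContDiffOn ℝ ∞ ζ U := by
    rw [show ζ = _ from funext hζ]
    exact (hb₁.smul hξ).add (hb₂.smul hη)
  have hξX := hX.vfD hU hξ
  have hηX := hX.vfD hU hη
  have hζξX := hξX.vfD hU hζsm
  have hζηX := hηX.vfD hU hζsm
  have hβ₁ : ContDiffOn ℝ ∞ (fun p => fderiv ℝ b₁ p (ζ p)) U :=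
    (hb₁.fderiv_of_isOpen hU (by simp)).clm_apply hζsm
  have hβ₂ : ContDiffOn ℝ ∞ (fun p => fderiv ℝ b₂ p (ζ p)) U :=
    (hb₂.fderiv_of_isOpen hU (by simp)).clm_apply hζsm
  have hζq : ζ q = b₂ q • η q := by simp [hζ, hb₁q]
  have hζζ : Set.EqOn (vfD ζ (vfD ζ X)) (fun p =>
      (fderiv ℝ b₁ p (ζ p) • vfD ξ X p + b₁ p • vfD ζ (vfD ξ X) p) +
        (fderiv ℝ b₂ p (ζ p) • vfD η X p + b₂ p • vfD ζ (vfD η X) p)) U := fun p hp =>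
    vfD_vfD_of_eq_smul_add_smul hζ (hb₁.differentiableAt_of_isOpen hU hp)
      (hb₂.differentiableAt_of_isOpen hU hp) (hξX.differentiableAt_of_isOpen hU hp)
      (hηX.differentiableAt_of_isOpen hU hp)
  have hζζη : vfD ζ (vfD ζ (vfD η X)) q =
      fderiv ℝ b₂ q (ζ q) • vfDIter η 2 X q + b₂ q ^ 2 • vfDIter η 3 X q := by
    rw [vfD_vfD_of_eq_smul_add_smul hζ (hb₁.differentiableAt_of_isOpen hU hq)
      (hb₂.differentiableAt_of_isOpen hU hq) ((hηX.vfD hU hξ).differentiableAt_of_isOpen hU hq)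
      ((hηX.vfD hU hη).differentiableAt_of_isOpen hU hq), hb₁q, hnull',
      vfD_apply_of_eq_smul hζq (Y := vfD η (vfD η X)), vfDIter_two, vfDIter_three]
    module
  refine ⟨fderiv ℝ (fun p => fderiv ℝ b₁ p (ζ p)) q (ζ q) + 2 * fderiv ℝ b₁ q (ζ q) * b₂ q * μ,
    3 * fderiv ℝ b₂ q (ζ q) * b₂ q, ?_⟩
  have dβ₁ := hβ₁.differentiableAt_of_isOpen hU hq
  have dβ₂ := hβ₂.differentiableAt_of_isOpen hU hq
  have db₁ := hb₁.differentiableAt_of_isOpen hU hq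
  have db₂ := hb₂.differentiableAt_of_isOpen hU hq
  have dξX := hξX.differentiableAt_of_isOpen hU hq
  have dηX := hηX.differentiableAt_of_isOpen hU hq
  have dζξX := hζξX.differentiableAt_of_isOpen hU hq
  have dζηX := hζηX.differentiableAt_of_isOpen hU hq
  rw [vfDIter_three, vfD_congr_of_eqOn hU hζζ hq,
    vfD_add_apply ((dβ₁.fun_smul dξX).fun_add (db₁.fun_smul dζξX))
      ((dβ₂.fun_smul dηX).fun_add (db₂.fun_smul dζηX)),
    vfD_add_apply (dβ₁.fun_smul dξX) (db₁.fun_smul dζξX),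
    vfD_add_apply (dβ₂.fun_smul dηX) (db₂.fun_smul dζηX),
    vfD_smul_apply dβ₁ dξX, vfD_smul_apply db₁ dζξX, vfD_smul_apply dβ₂ dηX,
    vfD_smul_apply db₂ dζηX, hζζη, hb₁q, hnull, vfD_apply_of_eq_smul hζq (Y := vfD ξ X),
    vfD_apply_of_eq_smul hζq (Y := vfD η X), hμ, vfDIter_two]
  module

theorem det3_vfD_vfDIter_eq_mul_of_eq_smul_add_smul {ξb : ℝ × ℝ → ℝ × ℝ} {a : ℝ}
    (hU : IsOpen U) (hX : ContDiffOn ℝ ∞ X U)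
    (hξ : ContDiffOn ℝ ∞ ξ U) (hη : ContDiffOn ℝ ∞ η U)
    (hb₁ : ContDiffOn ℝ ∞ b₁ U) (hb₂ : ContDiffOn ℝ ∞ b₂ U)
    (hξb : ξb q = a • ξ q) (hζ : ∀ q, ζ q = b₁ q • ξ q + b₂ q • η q) (hq : q ∈ U)
    (hηq : η q ≠ 0) (hb₁q : b₁ q = 0) (hnull : vfD η X q = 0)
    (hnull' : vfD ξ (vfD η X) q = 0) :
    det3 (vfD ξb X q) (vfDIter ζ 2 X q) (vfDIter ζ 3 X q) =
      a * b₂ q ^ 5 * det3 (vfD ξ X q) (vfDIter η 2 X q) (vfDIter η 3 X q) := by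
  rw [vfD_apply_of_eq_smul hξb]
  by_cases hξX : vfD ξ X q = 0
  · simp [hξX, det3_zero_left]
  have hspan : vfD η (vfD ξ X) q ∈ ℝ ∙ vfD ξ X q := by
    have hbracket := vfD_vfD_sub_vfD_vfD hU hX (hξ.differentiableAt_of_isOpen hU hq)
      (hη.differentiableAt_of_isOpen hU hq) hq
    rw [hnull', zero_sub, neg_eq_iff_eq_neg] at hbracket
    rw [hbracket, ← map_neg]
    exact (fderiv ℝ X q : (ℝ × ℝ) →ₗ[ℝ] Fin 3 → ℝ).apply_mem_span_singleton_of_apply_eq_zero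
      (by simp) hηq hnull hξX _
  obtain ⟨μ, hμ⟩ := Submodule.mem_span_singleton.1 hspan
  obtain ⟨c, d, h3⟩ := vfDIter_three_apply_of_eq_smul_add_smul hU hX hξ hη hb₁ hb₂ hζ hq hb₁q
    hnull hnull' hμ.symm
  rw [vfDIter_two_apply_of_eq_smul_add_smul hζ (hb₁.differentiableAt_of_isOpen hU hq)
    (hb₂.differentiableAt_of_isOpen hU hq) ((hX.vfD hU hξ).differentiableAt_of_isOpen hU hq)
    ((hX.vfD hU hη).differentiableAt_of_isOpen hU hq) hb₁q hnull, h3, det3_smul_triangular]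
  ring

end ChangeOfField

theorem condition3_independent_of_fields_general
    (U : Set (ℝ × ℝ)) (hU : IsOpen U)
    (X : ℝ × ℝ → Fin 3 → ℝ) (hfr : IsFrontalOn X U)
    -- the singular curve γ(t), |t| < ε, through p = γ(0)
    (ε : ℝ) (γ : ℝ → ℝ × ℝ)
    (hγmem : ∀ t ∈ Set.Ioo (-ε) ε, γ t ∈ U)
    (hγsm : ContDiffOn ℝ (⊤:ℕ∞) γ (Set.Ioo (-ε) ε))
    -- a null vector field η₀ along γ
    (η₀ : ℝ → ℝ × ℝ)
    (hη₀ : ∀ t ∈ Set.Ioo (-ε) ε, η₀ t ≠ 0 ∧ fderiv ℝ X (γ t) (η₀ t) = 0)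
    -- ξ, η : smooth extensions of γ' and of the null vector field η₀
    (ξ η : ℝ × ℝ → ℝ × ℝ)
    (hξsm : ContDiffOn ℝ (⊤:ℕ∞) ξ U) (hηsm : ContDiffOn ℝ (⊤:ℕ∞) η U)
    (hξγ : ∀ t ∈ Set.Ioo (-ε) ε, ξ (γ t) = deriv γ t)
    (hηγ : ∀ t ∈ Set.Ioo (-ε) ε, η (γ t) = η₀ t)
    -- change of extensions: ξ̄ = a₁ξ + a₂η, η̄ = b₁ξ + b₂η
    (a₁ a₂ b₁ b₂ : ℝ × ℝ → ℝ)
    (hb₁ : ContDiffOn ℝ (⊤:ℕ∞) b₁ U) (hb₂ : ContDiffOn ℝ (⊤:ℕ∞) b₂ U)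
    (hcoef : ∀ t ∈ Set.Ioo (-ε) ε,
      a₂ (γ t) = 0 ∧ b₁ (γ t) = 0 ∧ a₁ (γ t) ≠ 0 ∧ b₂ (γ t) ≠ 0)
    (ξb ηb : ℝ × ℝ → ℝ × ℝ)
    (hξb : ∀ q, ξb q = a₁ q • ξ q + a₂ q • η q)
    (hηb : ∀ q, ηb q = b₁ q • ξ q + b₂ q • η q) :
    (∀ t ∈ Set.Ioo (-ε) ε,
        det3 (vfD ξ X (γ t)) (vfDIter η 2 X (γ t)) (vfDIter η 3 X (γ t)) = 0) ↔
    (∀ t ∈ Set.Ioo (-ε) ε,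
        det3 (vfD ξb X (γ t)) (vfDIter ηb 2 X (γ t)) (vfDIter ηb 3 X (γ t)) = 0) := by
  have hnull : ∀ t ∈ Set.Ioo (-ε) ε, vfD η X (γ t) = 0 := fun t ht => by
    rw [vfD, hηγ t ht]
    exact (hη₀ t ht).2
  have hkey : ∀ t ∈ Set.Ioo (-ε) ε,
      det3 (vfD ξb X (γ t)) (vfDIter ηb 2 X (γ t)) (vfDIter ηb 3 X (γ t)) =
        a₁ (γ t) * b₂ (γ t) ^ 5 *
          det3 (vfD ξ X (γ t)) (vfDIter η 2 X (γ t)) (vfDIter η 3 X (γ t)) := by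
    intro t ht
    obtain ⟨ha₂t, hb₁t, -, -⟩ := hcoef t ht
    have hnull' : vfD ξ (vfD η X) (γ t) = 0 :=
      vfD_eq_zero_of_comp_eventually_eq_zero
        ((hfr.1.vfD hU hηsm).differentiableAt_of_isOpen hU (hγmem t ht))
        (hγsm.differentiableAt_of_isOpen isOpen_Ioo ht) (hξγ t ht)
        (Filter.eventually_of_mem (isOpen_Ioo.mem_nhds ht) hnull)
    exact det3_vfD_vfDIter_eq_mul_of_eq_smul_add_smul hU hfr.1 hξsm hηsm hb₁ hb₂
      (by rw [hξb, ha₂t, zero_smul, add_zero]) hηb (hγmem t ht)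
      (by rw [hηγ t ht]; exact (hη₀ t ht).1) hb₁t (hnull t ht) hnull'
  refine forall₂_congr fun t ht => ?_
  obtain ⟨-, -, ha₁t, hb₂t⟩ := hcoef t ht
  simp [hkey t ht, ha₁t, hb₂t]

/-- The first criterion condition is independent of the choice of ξ and η. -/
theorem condition3_independent_of_fields
    (U : Set (ℝ × ℝ)) (hU : IsOpen U)
    (X : ℝ × ℝ → Fin 3 → ℝ) (hfr : IsFrontalOn X U)
    (p : ℝ × ℝ) (hp : p ∈ U) (hnd : IsNondegSing X U p)
    -- the singular curve γ(t), |t| < ε, through p = γ(0)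
    (ε : ℝ) (hε : 0 < ε) (γ : ℝ → ℝ × ℝ)
    (hγmem : ∀ t ∈ Set.Ioo (-ε) ε, γ t ∈ U)
    (hγsm : ContDiffOn ℝ (⊤:ℕ∞) γ (Set.Ioo (-ε) ε))
    (hγ0 : γ 0 = p)
    (hγreg : ∀ t ∈ Set.Ioo (-ε) ε, deriv γ t ≠ 0)
    (hγsing : ∃ W, IsOpen W ∧ p ∈ W ∧ W ⊆ U ∧
      ∀ q ∈ W, (IsSingularPt X q ↔ q ∈ γ '' Set.Ioo (-ε) ε))
    -- a null vector field η₀ along γ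
    (η₀ : ℝ → ℝ × ℝ) (hη₀sm : ContDiffOn ℝ (⊤:ℕ∞) η₀ (Set.Ioo (-ε) ε))
    (hη₀ : ∀ t ∈ Set.Ioo (-ε) ε, η₀ t ≠ 0 ∧ fderiv ℝ X (γ t) (η₀ t) = 0)
    -- p is of the first kind
    (hfirst : LinearIndependent ℝ ![deriv γ 0, η₀ 0])
    -- ξ, η : smooth extensions of γ' and of the null vector field η₀
    (ξ η : ℝ × ℝ → ℝ × ℝ)
    (hξsm : ContDiffOn ℝ (⊤:ℕ∞) ξ U) (hηsm : ContDiffOn ℝ (⊤:ℕ∞) η U)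
    (hξγ : ∀ t ∈ Set.Ioo (-ε) ε, ξ (γ t) = deriv γ t)
    (hηγ : ∀ t ∈ Set.Ioo (-ε) ε, η (γ t) = η₀ t)
    -- change of extensions: ξ̄ = a₁ξ + a₂η, η̄ = b₁ξ + b₂η
    (a₁ a₂ b₁ b₂ : ℝ × ℝ → ℝ)
    (ha₁ : ContDiffOn ℝ (⊤:ℕ∞) a₁ U) (ha₂ : ContDiffOn ℝ (⊤:ℕ∞) a₂ U)
    (hb₁ : ContDiffOn ℝ (⊤:ℕ∞) b₁ U) (hb₂ : ContDiffOn ℝ (⊤:ℕ∞) b₂ U)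
    (hcoef : ∀ t ∈ Set.Ioo (-ε) ε,
      a₂ (γ t) = 0 ∧ b₁ (γ t) = 0 ∧ a₁ (γ t) ≠ 0 ∧ b₂ (γ t) ≠ 0)
    (ξb ηb : ℝ × ℝ → ℝ × ℝ)
    (hξb : ∀ q, ξb q = a₁ q • ξ q + a₂ q • η q)
    (hηb : ∀ q, ηb q = b₁ q • ξ q + b₂ q • η q) :
    (∀ t ∈ Set.Ioo (-ε) ε,
        det3 (vfD ξ X (γ t)) (vfDIter η 2 X (γ t)) (vfDIter η 3 X (γ t)) = 0) ↔
    (∀ t ∈ Set.Ioo (-ε) ε,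
        det3 (vfD ξb X (γ t)) (vfDIter ηb 2 X (γ t)) (vfDIter ηb 3 X (γ t)) = 0) :=
  condition3_independent_of_fields_general U hU X hfr ε γ hγmem hγsm η₀ hη₀ ξ η hξsm hηsm hξγ hηγ a₁
    a₂ b₁ b₂ hb₁ hb₂ hcoef ξb ηb hξb hηb
end
end

section
/- Let X : U → ℝ³ be a frontal, p a non-degenerate singular point of the first kind, γ(t) (|t| < ε) the singular curve through p, ξ, η extensions of γ' and of a null vector field, and Φ a diffeomorphism from an open neighborhood of X(p) in ℝ³ onto an open subset of ℝ³. Then along the singular curve one has ξ(Φ∘X) = dΦ(ξX), η²(Φ∘X) = dΦ(η²X), and η³(Φ∘X) = dΦ(η³X); in particular det(ξ(Φ∘X), η²(Φ∘X), η³(Φ∘X))(γ(t)) = det(dΦ_{X(γ(t))})·det(ξX, η²X, η³X)(γ(t)) for all |t| < ε. Moreover, if η̃ is an extension of a null vector field with η̃³X(p) = C·η̃²X(p) for a constant C, then η̃³(Φ∘X)(p) = C·η̃²(Φ∘X)(p) and (3η̃⁵(Φ∘X) − 10C·η̃⁴(Φ∘X))(p) = dΦ_{X(p)}((3η̃⁵X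 − 10C·η̃⁴X)(p)). -/
/-!
Everything is the chain rule, iterated. Write `ζ` for a vector field and `Y = Φ ∘ X`. Since
`ζY = (dΦ ∘ X)(ζX)`, the Leibniz rule gives
`ζⁿ⁺¹Y = ∑ C(n,i) ζⁱ(dΦ ∘ X)(ζⁿ⁻ⁱ⁺¹X)`.
At a point where `ζX = 0` the chain rule also kills `ζ(dΦ ∘ X) = d²Φ(ζX)` and
`ζ(d²Φ ∘ X)`, so `ζ²Y` and `ζ³Y` are `dΦ(ζ²X)` and `dΦ(ζ³X)`, while
`ζ⁴Y = 3 d²Φ(ζ²X, ζ²X) + dΦ(ζ⁴X)` and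
`ζ⁵Y = 6 d²Φ(ζ²X, ζ³X) + 4 d²Φ(ζ³X, ζ²X) + dΦ(ζ⁵X)`.
If `ζ³X = C ζ²X`, the second-order terms of `3ζ⁵Y` and `10C ζ⁴Y` are both `30C d²Φ(ζ²X, ζ²X)`
and cancel.
-/

noncomputable section

open Set

open scoped ContDiff

section DirectionalDerivative

open Finset

variable {E F G : Type*} [NormedAddCommGroup E] [NormedSpace ℝ E]
  [NormedAddCommGroup F] [NormedSpace ℝ F] [NormedAddCommGroup G] [NormedSpace ℝ G]
  {V : Set E} {ζ : E → E}

/-- `vfD` for an arbitrary codomain, so that it applies to operator-valued maps like `dΦ ∘ X`. -/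
def dirDeriv (ζ : E → E) (f : E → F) : E → F := fun x => fderiv ℝ f x (ζ x)

lemma contDiffOn_dirDeriv (hV : IsOpen V) (hζ : ContDiffOn ℝ ∞ ζ V) {f : E → F}
    (hf : ContDiffOn ℝ ∞ f V) : ContDiffOn ℝ ∞ (dirDeriv ζ f) V :=
  ((contDiffOn_infty_iff_fderiv_of_isOpen hV).1 hf).2.clm_apply hζ

lemma contDiffOn_iterate_dirDeriv (hV : IsOpen V) (hζ : ContDiffOn ℝ ∞ ζ V) {f : E → F}
    (hf : ContDiffOn ℝ ∞ f V) (n : ℕ) : ContDiffOn ℝ ∞ ((dirDeriv ζ)^[n] f) V := by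
  induction n with
  | zero => exact hf
  | succ n ih =>
    rw [Function.iterate_succ_apply']
    exact contDiffOn_dirDeriv hV hζ ih

lemma dirDeriv_eqOn (hV : IsOpen V) {f g : E → F} (h : EqOn f g V) :
    EqOn (dirDeriv ζ f) (dirDeriv ζ g) V := fun x hx => by
  simp only [dirDeriv,
    Filter.EventuallyEq.fderiv_eq (Filter.eventuallyEq_of_mem (hV.mem_nhds hx) h)]

lemma iterate_dirDeriv_eqOn (hV : IsOpen V) {f g : E → F} (h : EqOn f g V) (n : ℕ) :
    EqOn ((dirDeriv ζ)^[n] f) ((dirDeriv ζ)^[n] g) V := by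
  induction n with
  | zero => exact h
  | succ n ih =>
    simp only [Function.iterate_succ_apply']
    exact dirDeriv_eqOn hV ih

lemma dirDeriv_comp {g : F → G} {X : E → F} {x : E} (hg : DifferentiableAt ℝ g (X x))
    (hX : DifferentiableAt ℝ X x) :
    dirDeriv ζ (fun y => g (X y)) x = fderiv ℝ g (X x) (dirDeriv ζ X x) := by
  simp only [dirDeriv, fderiv_fun_comp x hg hX, ContinuousLinearMap.comp_apply]

lemma dirDeriv_clm_apply {A : E → F →L[ℝ] G} {w : E → F} {x : E}
    (hA : DifferentiableAt ℝ A x) (hw : DifferentiableAt ℝ w x) :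
    dirDeriv ζ (fun y => A y (w y)) x = A x (dirDeriv ζ w x) + dirDeriv ζ A x (w x) := by
  simp only [dirDeriv, fderiv_clm_apply hA hw, add_apply,
    ContinuousLinearMap.comp_apply, ContinuousLinearMap.flip_apply]

lemma dirDeriv_sum_nsmul {ι : Type*} (s : Finset ι) (c : ι → ℕ) {f : ι → E → F} {x : E}
    (hf : ∀ i ∈ s, DifferentiableAt ℝ (f i) x) :
    dirDeriv ζ (fun y => ∑ i ∈ s, c i • f i y) x = ∑ i ∈ s, c i • dirDeriv ζ (f i) x := by
  simp only [dirDeriv]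
  rw [fderiv_fun_sum (A := fun i y => c i • f i y) fun i hi => (hf i hi).const_smul (c i),
    _root_.sum_apply]
  refine sum_congr rfl fun i hi => ?_
  rw [fderiv_fun_const_smul (hf i hi), smul_apply]

lemma differentiableAt_iterate_dirDeriv (hV : IsOpen V) (hζ : ContDiffOn ℝ ∞ ζ V) {f : E → F}
    (hf : ContDiffOn ℝ ∞ f V) (n : ℕ) {x : E} (hx : x ∈ V) :
    DifferentiableAt ℝ ((dirDeriv ζ)^[n] f) x :=
  ((contDiffOn_iterate_dirDeriv hV hζ hf n).differentiableOn (by simp)).differentiableAt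
    (hV.mem_nhds hx)

lemma iterate_dirDeriv_clm_apply (hV : IsOpen V) (hζ : ContDiffOn ℝ ∞ ζ V)
    {A : E → F →L[ℝ] G} {w : E → F} (hA : ContDiffOn ℝ ∞ A V) (hw : ContDiffOn ℝ ∞ w V)
    (n : ℕ) :
    EqOn ((dirDeriv ζ)^[n] fun y => A y (w y))
      (fun y => ∑ ij ∈ antidiagonal n,
        n.choose ij.1 • ((dirDeriv ζ)^[ij.1] A y) ((dirDeriv ζ)^[ij.2] w y)) V := by
  induction n with
  | zero => intro x _; simp
  | succ n ih =>
    intro x hx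
    have hA' k := differentiableAt_iterate_dirDeriv hV hζ hA k hx
    have hw' k := differentiableAt_iterate_dirDeriv hV hζ hw k hx
    rw [Function.iterate_succ_apply', dirDeriv_eqOn hV ih hx,
      dirDeriv_sum_nsmul _ _ fun ij _ => (hA' ij.1).clm_apply (hw' ij.2)]
    dsimp only
    rw [sum_antidiagonal_choose_succ_nsmul
      (fun i j => ((dirDeriv ζ)^[i] A x) ((dirDeriv ζ)^[j] w x)) n]
    simp only [dirDeriv_clm_apply (hA' _) (hw' _), smul_add, sum_add_distrib,
      ← Function.iterate_succ_apply' (dirDeriv ζ)]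
    congr 1
    refine sum_congr rfl fun ij hij => ?_
    rw [n.choose_symm_of_eq_add (mem_antidiagonal.1 hij).symm]

variable {X : E → F} {g : F → G}

lemma contDiffOn_comp_of_contDiffAt (hV : IsOpen V) (hX : ContDiffOn ℝ ∞ X V)
    (hg : ∀ x ∈ V, ContDiffAt ℝ ∞ g (X x)) : ContDiffOn ℝ ∞ (fun y => g (X y)) V :=
  fun x hx => ((hg x hx).comp x (hX.contDiffAt (hV.mem_nhds hx))).contDiffWithinAt

lemma iterate_succ_dirDeriv_comp (hV : IsOpen V) (hζ : ContDiffOn ℝ ∞ ζ V)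
    (hX : ContDiffOn ℝ ∞ X V) (hg : ∀ x ∈ V, ContDiffAt ℝ ∞ g (X x)) (n : ℕ) :
    EqOn ((dirDeriv ζ)^[n + 1] fun y => g (X y))
      (fun y => ∑ ij ∈ antidiagonal n, n.choose ij.1 •
        ((dirDeriv ζ)^[ij.1] (fun y => fderiv ℝ g (X y)) y) ((dirDeriv ζ)^[ij.2 + 1] X y)) V := by
  have hchain :
      EqOn (dirDeriv ζ fun y => g (X y)) (fun y => fderiv ℝ g (X y) (dirDeriv ζ X y)) V :=
    fun x hx => dirDeriv_comp ((hg x hx).differentiableAt (by simp))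
      ((hX.contDiffAt (hV.mem_nhds hx)).differentiableAt (by simp))
  have hdg : ContDiffOn ℝ ∞ (fun y => fderiv ℝ g (X y)) V :=
    contDiffOn_comp_of_contDiffAt hV hX fun x hx => (hg x hx).fderiv_right le_rfl
  intro x hx
  rw [Function.iterate_succ_apply, iterate_dirDeriv_eqOn hV hchain n hx,
    iterate_dirDeriv_clm_apply hV hζ hdg (contDiffOn_dirDeriv hV hζ hX) n hx]
  simp only [← Function.iterate_succ_apply]

variable {x₀ : E}

lemma iterate_two_dirDeriv_comp_of_null (hV : IsOpen V) (hζ : ContDiffOn ℝ ∞ ζ V)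
    (hX : ContDiffOn ℝ ∞ X V) (hg : ∀ x ∈ V, ContDiffAt ℝ ∞ g (X x)) (hx₀ : x₀ ∈ V)
    (h0 : dirDeriv ζ X x₀ = 0) :
    (dirDeriv ζ)^[2] (fun y => g (X y)) x₀ = fderiv ℝ g (X x₀) ((dirDeriv ζ)^[2] X x₀) := by
  rw [iterate_succ_dirDeriv_comp hV hζ hX hg 1 hx₀]
  simp [Finset.Nat.sum_antidiagonal_eq_sum_range_succ_mk, Finset.sum_range_succ, h0]

lemma dirDeriv_fderiv_comp_eq_zero (hV : IsOpen V) (hX : ContDiffOn ℝ ∞ X V)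
    (hg : ∀ x ∈ V, ContDiffAt ℝ ∞ g (X x)) (hx₀ : x₀ ∈ V) (h0 : dirDeriv ζ X x₀ = 0) :
    dirDeriv ζ (fun y => fderiv ℝ g (X y)) x₀ = 0 := by
  rw [dirDeriv_comp (((hg x₀ hx₀).fderiv_right (m := ∞) le_rfl).differentiableAt (by simp))
    ((hX.contDiffAt (hV.mem_nhds hx₀)).differentiableAt (by simp)), h0, map_zero]

lemma iterate_three_dirDeriv_comp_of_null (hV : IsOpen V) (hζ : ContDiffOn ℝ ∞ ζ V)
    (hX : ContDiffOn ℝ ∞ X V) (hg : ∀ x ∈ V, ContDiffAt ℝ ∞ g (X x)) (hx₀ : x₀ ∈ V)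
    (h0 : dirDeriv ζ X x₀ = 0) :
    (dirDeriv ζ)^[3] (fun y => g (X y)) x₀ = fderiv ℝ g (X x₀) ((dirDeriv ζ)^[3] X x₀) := by
  rw [iterate_succ_dirDeriv_comp hV hζ hX hg 2 hx₀]
  simp [Finset.Nat.sum_antidiagonal_eq_sum_range_succ_mk, Finset.sum_range_succ, h0,
    dirDeriv_fderiv_comp_eq_zero hV hX hg hx₀ h0]

lemma iterate_four_dirDeriv_comp_of_null (hV : IsOpen V) (hζ : ContDiffOn ℝ ∞ ζ V)
    (hX : ContDiffOn ℝ ∞ X V) (hg : ∀ x ∈ V, ContDiffAt ℝ ∞ g (X x)) (hx₀ : x₀ ∈ V)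
    (h0 : dirDeriv ζ X x₀ = 0) :
    (dirDeriv ζ)^[4] (fun y => g (X y)) x₀ =
      3 • fderiv ℝ (fderiv ℝ g) (X x₀) ((dirDeriv ζ)^[2] X x₀) ((dirDeriv ζ)^[2] X x₀)
        + fderiv ℝ g (X x₀) ((dirDeriv ζ)^[4] X x₀) := by
  have hdg : ∀ x ∈ V, ContDiffAt ℝ ∞ (fderiv ℝ g) (X x) :=
    fun x hx => (hg x hx).fderiv_right le_rfl
  rw [iterate_succ_dirDeriv_comp hV hζ hX hg 3 hx₀]
  simp [Finset.Nat.sum_antidiagonal_eq_sum_range_succ_mk, Finset.sum_range_succ, h0,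
    dirDeriv_fderiv_comp_eq_zero hV hX hg hx₀ h0,
    iterate_two_dirDeriv_comp_of_null hV hζ hX hdg hx₀ h0, add_comm]

lemma iterate_five_dirDeriv_comp_of_null (hV : IsOpen V) (hζ : ContDiffOn ℝ ∞ ζ V)
    (hX : ContDiffOn ℝ ∞ X V) (hg : ∀ x ∈ V, ContDiffAt ℝ ∞ g (X x)) (hx₀ : x₀ ∈ V)
    (h0 : dirDeriv ζ X x₀ = 0) :
    (dirDeriv ζ)^[5] (fun y => g (X y)) x₀ =
      6 • fderiv ℝ (fderiv ℝ g) (X x₀) ((dirDeriv ζ)^[2] X x₀) ((dirDeriv ζ)^[3] X x₀)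
        + 4 • fderiv ℝ (fderiv ℝ g) (X x₀) ((dirDeriv ζ)^[3] X x₀) ((dirDeriv ζ)^[2] X x₀)
        + fderiv ℝ g (X x₀) ((dirDeriv ζ)^[5] X x₀) := by
  have hdg : ∀ x ∈ V, ContDiffAt ℝ ∞ (fderiv ℝ g) (X x) :=
    fun x hx => (hg x hx).fderiv_right le_rfl
  rw [iterate_succ_dirDeriv_comp hV hζ hX hg 4 hx₀]
  simp [Finset.Nat.sum_antidiagonal_eq_sum_range_succ_mk, Finset.sum_range_succ, h0,
    dirDeriv_fderiv_comp_eq_zero hV hX hg hx₀ h0,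
    iterate_two_dirDeriv_comp_of_null hV hζ hX hdg hx₀ h0,
    iterate_three_dirDeriv_comp_of_null hV hζ hX hdg hx₀ h0,
    show Nat.choose 4 2 = 6 from rfl]
  abel

end DirectionalDerivative

lemma vfD_eq_dirDeriv (ζ : ℝ × ℝ → ℝ × ℝ) (X : ℝ × ℝ → Fin 3 → ℝ) :
    vfD ζ X = dirDeriv ζ X := rfl

lemma vfDIter_eq_iterate_dirDeriv (ζ : ℝ × ℝ → ℝ × ℝ) (k : ℕ) (X : ℝ × ℝ → Fin 3 → ℝ) :
    vfDIter ζ k X = (dirDeriv ζ)^[k] X := rfl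

lemma det3_eq_basisFun_det (a b c : Fin 3 → ℝ) :
    det3 a b c = (Pi.basisFun ℝ (Fin 3)).det ![a, b, c] := by
  rw [Pi.basisFun_det_apply, det3]

lemma det3_map (f : (Fin 3 → ℝ) →ₗ[ℝ] (Fin 3 → ℝ)) (a b c : Fin 3 → ℝ) :
    det3 (f a) (f b) (f c) = LinearMap.det f * det3 a b c := by
  simp only [det3_eq_basisFun_det, ← Module.Basis.det_comp]
  congr 1
  ext i : 1
  fin_cases i <;> rfl

theorem criterion_independent_of_target_coordinates_general
    (U : Set (ℝ × ℝ)) (hU : IsOpen U)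
    (X : ℝ × ℝ → Fin 3 → ℝ) (hfr : IsFrontalOn X U)
    (p : ℝ × ℝ) (hp : p ∈ U)
    -- the singular curve γ(t), |t| < ε, through p = γ(0)
    (ε : ℝ) (hε : 0 < ε) (γ : ℝ → ℝ × ℝ)
    (hγmem : ∀ t ∈ Set.Ioo (-ε) ε, γ t ∈ U)
    (hγ0 : γ 0 = p)
    -- a null vector field η₀ along γ
    (η₀ : ℝ → ℝ × ℝ)
    (hη₀ : ∀ t ∈ Set.Ioo (-ε) ε, η₀ t ≠ 0 ∧ fderiv ℝ X (γ t) (η₀ t) = 0)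
    -- ξ, η : smooth extensions of γ' and of the null vector field η₀
    (ξ η : ℝ × ℝ → ℝ × ℝ)
    (hηsm : ContDiffOn ℝ (⊤:ℕ∞) η U)
    (hηγ : ∀ t ∈ Set.Ioo (-ε) ε, η (γ t) = η₀ t)
    -- Φ : a diffeomorphism of a neighborhood of X(p) in ℝ³ onto an open set
    (s' t' : Set (Fin 3 → ℝ)) (Φ : (Fin 3 → ℝ) → (Fin 3 → ℝ))
    (hΦ : IsDiffeoOn Φ s' t') (hXp : X p ∈ s')
    (hXγ : ∀ t ∈ Set.Ioo (-ε) ε, X (γ t) ∈ s')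
    -- η̃ : a smooth extension of a null vector field along γ, with η̃³X(p) = C·η̃²X(p)
    (ηt : ℝ × ℝ → ℝ × ℝ) (hηtsm : ContDiffOn ℝ (⊤:ℕ∞) ηt U)
    (hηtnull : ∀ t ∈ Set.Ioo (-ε) ε, ηt (γ t) ≠ 0 ∧ fderiv ℝ X (γ t) (ηt (γ t)) = 0)
    (C : ℝ) (hC : vfDIter ηt 3 X p = C • vfDIter ηt 2 X p) :
    (∀ t ∈ Set.Ioo (-ε) ε,
      vfD ξ (fun q => Φ (X q)) (γ t) = fderiv ℝ Φ (X (γ t)) (vfD ξ X (γ t)) ∧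
      vfDIter η 2 (fun q => Φ (X q)) (γ t)
        = fderiv ℝ Φ (X (γ t)) (vfDIter η 2 X (γ t)) ∧
      vfDIter η 3 (fun q => Φ (X q)) (γ t)
        = fderiv ℝ Φ (X (γ t)) (vfDIter η 3 X (γ t)) ∧
      det3 (vfD ξ (fun q => Φ (X q)) (γ t)) (vfDIter η 2 (fun q => Φ (X q)) (γ t))
          (vfDIter η 3 (fun q => Φ (X q)) (γ t))
        = LinearMap.det (fderiv ℝ Φ (X (γ t))).toLinearMap *
            det3 (vfD ξ X (γ t)) (vfDIter η 2 X (γ t)) (vfDIter η 3 X (γ t))) ∧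
    vfDIter ηt 3 (fun q => Φ (X q)) p = C • vfDIter ηt 2 (fun q => Φ (X q)) p ∧
    (3:ℝ) • vfDIter ηt 5 (fun q => Φ (X q)) p
        - (10 * C) • vfDIter ηt 4 (fun q => Φ (X q)) p
      = fderiv ℝ Φ (X p)
          ((3:ℝ) • vfDIter ηt 5 X p - (10 * C) • vfDIter ηt 4 X p) := by
  obtain ⟨hs'o, -, hΦsm, -⟩ := hΦ
  set V := U ∩ X ⁻¹' s'
  have hVo : IsOpen V := hfr.1.continuousOn.isOpen_inter_preimage hU hs'o
  have hXsm : ContDiffOn ℝ ∞ X V := hfr.1.mono inter_subset_left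
  have hΦX : ∀ x ∈ V, ContDiffAt ℝ ∞ Φ (X x) :=
    fun x hx => hΦsm.contDiffAt (hs'o.mem_nhds hx.2)
  simp only [vfDIter_eq_iterate_dirDeriv, vfD_eq_dirDeriv]
  refine ⟨fun t ht => ?_, ?_⟩
  · have hγV : γ t ∈ V := ⟨hγmem t ht, hXγ t ht⟩
    have hnull : dirDeriv η X (γ t) = 0 := by simp only [dirDeriv, hηγ t ht, (hη₀ t ht).2]
    have h1 := dirDeriv_comp (ζ := ξ) ((hΦX _ hγV).differentiableAt (by simp))
      ((hXsm.contDiffAt (hVo.mem_nhds hγV)).differentiableAt (by simp))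
    have hη : ContDiffOn ℝ ∞ η V := hηsm.mono inter_subset_left
    have h2 := iterate_two_dirDeriv_comp_of_null hVo hη hXsm hΦX hγV hnull
    have h3 := iterate_three_dirDeriv_comp_of_null hVo hη hXsm hΦX hγV hnull
    exact ⟨h1, h2, h3, by rw [h1, h2, h3]; exact det3_map _ _ _ _⟩
  · have hpV : p ∈ V := ⟨hp, hXp⟩
    have hnull : dirDeriv ηt X p = 0 := hγ0 ▸ (hηtnull 0 ⟨neg_lt_zero.2 hε, hε⟩).2
    have hηt : ContDiffOn ℝ ∞ ηt V := hηtsm.mono inter_subset_left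
    rw [vfDIter_eq_iterate_dirDeriv, vfDIter_eq_iterate_dirDeriv] at hC
    rw [iterate_two_dirDeriv_comp_of_null hVo hηt hXsm hΦX hpV hnull,
      iterate_three_dirDeriv_comp_of_null hVo hηt hXsm hΦX hpV hnull,
      iterate_four_dirDeriv_comp_of_null hVo hηt hXsm hΦX hpV hnull,
      iterate_five_dirDeriv_comp_of_null hVo hηt hXsm hΦX hpV hnull, hC]
    refine ⟨map_smul _ _ _, ?_⟩
    simp only [map_smul, map_sub, smul_apply]
    module

/-- The criterion conditions transform naturally under a diffeomorphism Φ of ℝ³. -/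
theorem criterion_independent_of_target_coordinates
    (U : Set (ℝ × ℝ)) (hU : IsOpen U)
    (X : ℝ × ℝ → Fin 3 → ℝ) (hfr : IsFrontalOn X U)
    (p : ℝ × ℝ) (hp : p ∈ U) (hnd : IsNondegSing X U p)
    -- the singular curve γ(t), |t| < ε, through p = γ(0)
    (ε : ℝ) (hε : 0 < ε) (γ : ℝ → ℝ × ℝ)
    (hγmem : ∀ t ∈ Set.Ioo (-ε) ε, γ t ∈ U)
    (hγsm : ContDiffOn ℝ (⊤:ℕ∞) γ (Set.Ioo (-ε) ε))
    (hγ0 : γ 0 = p)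
    (hγreg : ∀ t ∈ Set.Ioo (-ε) ε, deriv γ t ≠ 0)
    (hγsing : ∃ W, IsOpen W ∧ p ∈ W ∧ W ⊆ U ∧
      ∀ q ∈ W, (IsSingularPt X q ↔ q ∈ γ '' Set.Ioo (-ε) ε))
    -- a null vector field η₀ along γ
    (η₀ : ℝ → ℝ × ℝ) (hη₀sm : ContDiffOn ℝ (⊤:ℕ∞) η₀ (Set.Ioo (-ε) ε))
    (hη₀ : ∀ t ∈ Set.Ioo (-ε) ε, η₀ t ≠ 0 ∧ fderiv ℝ X (γ t) (η₀ t) = 0)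
    -- p is of the first kind
    (hfirst : LinearIndependent ℝ ![deriv γ 0, η₀ 0])
    -- ξ, η : smooth extensions of γ' and of the null vector field η₀
    (ξ η : ℝ × ℝ → ℝ × ℝ)
    (hξsm : ContDiffOn ℝ (⊤:ℕ∞) ξ U) (hηsm : ContDiffOn ℝ (⊤:ℕ∞) η U)
    (hξγ : ∀ t ∈ Set.Ioo (-ε) ε, ξ (γ t) = deriv γ t)
    (hηγ : ∀ t ∈ Set.Ioo (-ε) ε, η (γ t) = η₀ t)
    -- Φ : a diffeomorphism of a neighborhood of X(p) in ℝ³ onto an open set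
    (s' t' : Set (Fin 3 → ℝ)) (Φ : (Fin 3 → ℝ) → (Fin 3 → ℝ))
    (hΦ : IsDiffeoOn Φ s' t') (hXp : X p ∈ s')
    (hXγ : ∀ t ∈ Set.Ioo (-ε) ε, X (γ t) ∈ s')
    -- η̃ : a smooth extension of a null vector field along γ, with η̃³X(p) = C·η̃²X(p)
    (ηt : ℝ × ℝ → ℝ × ℝ) (hηtsm : ContDiffOn ℝ (⊤:ℕ∞) ηt U)
    (hηtnull : ∀ t ∈ Set.Ioo (-ε) ε, ηt (γ t) ≠ 0 ∧ fderiv ℝ X (γ t) (ηt (γ t)) = 0)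
    (C : ℝ) (hC : vfDIter ηt 3 X p = C • vfDIter ηt 2 X p) :
    (∀ t ∈ Set.Ioo (-ε) ε,
      vfD ξ (fun q => Φ (X q)) (γ t) = fderiv ℝ Φ (X (γ t)) (vfD ξ X (γ t)) ∧
      vfDIter η 2 (fun q => Φ (X q)) (γ t)
        = fderiv ℝ Φ (X (γ t)) (vfDIter η 2 X (γ t)) ∧
      vfDIter η 3 (fun q => Φ (X q)) (γ t)
        = fderiv ℝ Φ (X (γ t)) (vfDIter η 3 X (γ t)) ∧
      det3 (vfD ξ (fun q => Φ (X q)) (γ t)) (vfDIter η 2 (fun q => Φ (X q)) (γ t))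
          (vfDIter η 3 (fun q => Φ (X q)) (γ t))
        = LinearMap.det (fderiv ℝ Φ (X (γ t))).toLinearMap *
            det3 (vfD ξ X (γ t)) (vfDIter η 2 X (γ t)) (vfDIter η 3 X (γ t))) ∧
    vfDIter ηt 3 (fun q => Φ (X q)) p = C • vfDIter ηt 2 (fun q => Φ (X q)) p ∧
    (3:ℝ) • vfDIter ηt 5 (fun q => Φ (X q)) p
        - (10 * C) • vfDIter ηt 4 (fun q => Φ (X q)) p
      = fderiv ℝ Φ (X p)
          ((3:ℝ) • vfDIter ηt 5 X p - (10 * C) • vfDIter ηt 4 X p) :=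
  criterion_independent_of_target_coordinates_general U hU X hfr p hp ε hε γ hγmem hγ0 η₀ hη₀ ξ η
    hηsm hηγ s' t' Φ hΦ hXp hXγ ηt hηtsm hηtnull C hC
end
end

section
/- Let H ≠ 0 and k < −1 be real numbers. Define δ(r) = (r² + k + 1)² − 4k (positive for all r), Δ(r) = 2(k+1)r² + (1−k)², h = (1−k)/(2H|1+k|), and on the strip D = {(r,t) : |r| < (1−k)/√(2|1+k|)} (where Δ(r) > 0) set ρ(r) = √Δ(r)/(2H|k+1|), λ(r) = ∫₀^r √(2|1+k|)·τ⁴/(H√δ(τ)·Δ(τ)) dτ, φ(r,t) = −∫₀^r √(2|1+k|)·(1−k)·τ²/(√δ(τ)·Δ(τ)) dτ − √(|1+k|/2)·t, and X(r,t) = (ρ(r)·sinh φ(r,t), ρ(r)·cosh φ(r,t), λ(r) + h·φ(r,t)). Then the singular points of X in D are exactly the points with r = 0, and every singular point of X is a (2,5)-cuspidal edge. -/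
noncomputable section

open Set

/-- `δ(r) = (r² + k + 1)² − 4k`. -/
def δT (k r : ℝ) : ℝ := (r ^ 2 + k + 1) ^ 2 - 4 * k

/-- `Δ(r) = 2(k+1)r² + (1−k)²`. -/
def ΔT (k r : ℝ) : ℝ := 2 * (k + 1) * r ^ 2 + (1 - k) ^ 2

/-- `h = (1−k)/(2H|1+k|)`. -/
def h12 (H k : ℝ) : ℝ := (1 - k) / (2 * H * |1 + k|)

/-- `ρ(r) = √Δ(r)/(2H|k+1|)`. -/
def ρ12 (H k r : ℝ) : ℝ := Real.sqrt (ΔT k r) / (2 * H * |k + 1|)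

/-- `λ(r) = ∫₀^r √(2|1+k|)·τ⁴/(H√δ(τ)·Δ(τ)) dτ`. -/
def lam12 (H k r : ℝ) : ℝ :=
  ∫ τ in (0:ℝ)..r, Real.sqrt (2 * |1 + k|) * τ ^ 4 / (H * Real.sqrt (δT k τ) * ΔT k τ)

/-- `φ(r,t) = −∫₀^r √(2|1+k|)·(1−k)·τ²/(√δ(τ)·Δ(τ)) dτ − √(|1+k|/2)·t`. -/
def φ12 (H k r t : ℝ) : ℝ :=
  -(∫ τ in (0:ℝ)..r,
      Real.sqrt (2 * |1 + k|) * (1 - k) * τ ^ 2 / (Real.sqrt (δT k τ) * ΔT k τ))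
    - Real.sqrt (|1 + k| / 2) * t

/-- The strip `{(r,t) : |r| < (1−k)/√(2|1+k|)}`. -/
def D12 (k : ℝ) : Set (ℝ × ℝ) := {p : ℝ × ℝ | |p.1| < (1 - k) / Real.sqrt (2 * |1 + k|)}

/-- The conjugate of the spacelike Delaunay surface with timelike axis (`k < −1`):
`X(r,t) = (ρ(r)·sinh φ(r,t), ρ(r)·cosh φ(r,t), λ(r) + h·φ(r,t))`. -/
def X12 (H k : ℝ) (p : ℝ × ℝ) : Fin 3 → ℝ :=
  ![ρ12 H k p.1 * Real.sinh (φ12 H k p.1 p.2),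
    ρ12 H k p.1 * Real.cosh (φ12 H k p.1 p.2),
    lam12 H k p.1 + h12 H k * φ12 H k p.1 p.2]

/-!
Write `X = (ρ sinh φ, ρ cosh φ, λ + h φ)` with `φ = -G(r) - β t`. The covector
`cosh φ · e₁* - sinh φ · e₀*` kills `X_t ≠ 0` and sends `X_r` to `ρ'(r)`, which vanishes only at
`r = 0`; there `ρ'`, `G'` and `λ'` all vanish, so `X_r = 0`.

Both integrands are constant multiples of `τ² w(τ²)` and `τ⁴ w(τ²)` for a weight `w` that is smooth
on `|s| < halfWidth²`. Substituting `τ = rσ` gives `λ(r) = r⁵ L(r²) / H` with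
`L(s) = ∫₀¹ σ⁴ w(sσ²) dσ`, smooth by differentiation under the integral, and `L(0) = w(0) / 5 ≠ 0`.
As `ρ(r) = R(r²)` too, the shear `(u, v) ↦ (r, t)` with `r = v`, `φ = u + φ₀` turns `X` into
`Ψ(u, v², v⁵)` for `Ψ(u, s, z) = (R(s) sinh(u + φ₀), R(s) cosh(u + φ₀), L(s) z / H + h (u + φ₀))`.
Near `s = 0` this `Ψ` has a smooth inverse: `u + φ₀` and `R(s)` are the hyperbolic polar coordinates
of the first two components, `s` is affine in `R(s)²`, and `z` is obtained by dividing by `L(s)`.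
-/

open Real Filter Topology

theorem linearIndependent_pair_of_apply {K M : Type*} [Field K] [AddCommGroup M] [Module K M]
    {u v : M} (ℓ : M →ₗ[K] K) (hu : ℓ u ≠ 0) (hv : ℓ v = 0) (hv₀ : v ≠ 0) :
    LinearIndependent K ![u, v] := by
  refine LinearIndependent.pair_iff.2 fun s t hst => ?_
  have hs : s = 0 := by simpa [hv, hu] using congrArg ℓ hst
  subst hs
  rw [zero_smul, zero_add, smul_eq_zero] at hst
  exact ⟨rfl, hst.resolve_right hv₀⟩

theorem IsDiffeoOn.of_invOn {E F : Type*} [NormedAddCommGroup E] [NormedSpace ℝ E]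
    [NormedAddCommGroup F] [NormedSpace ℝ F] {f : E → F} {g : F → E} {s : Set E} {t : Set F}
    (hs : IsOpen s) (ht : IsOpen t) (hf : ContDiffOn ℝ (⊤:ℕ∞) f s)
    (hg : ContDiffOn ℝ (⊤:ℕ∞) g t) (hfst : MapsTo f s t) (hgts : MapsTo g t s)
    (hinv : InvOn g f s t) : IsDiffeoOn f s t :=
  ⟨hs, ht, hf, hinv.bijOn hfst hgts, g, hg, hinv.1, hinv.2⟩

theorem isDiffeoOn_shear {f : ℝ → ℝ} {U : Set ℝ} (hU : IsOpen U)
    (hf : ContDiffOn ℝ (⊤:ℕ∞) f U) {β : ℝ} (hβ : β ≠ 0) :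
    IsDiffeoOn (fun w : ℝ × ℝ => (w.2, (f w.2 - w.1) / β)) {w | w.2 ∈ U} {q | q.1 ∈ U} := by
  refine IsDiffeoOn.of_invOn (g := fun q : ℝ × ℝ => (f q.1 - β * q.2, q.1))
    (hU.preimage continuous_snd) (hU.preimage continuous_fst) ?_ ?_
    (fun w hw => hw) (fun q hq => hq) ⟨fun w _ => ?_, fun q _ => ?_⟩
  · exact contDiffOn_snd.prodMk
      (((hf.comp contDiffOn_snd fun w hw => hw).sub contDiffOn_fst).div_const β)
  · exact ((hf.comp contDiffOn_fst fun q hq => hq).sub (contDiffOn_snd.const_smul β)).prodMk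
      contDiffOn_fst
  · exact Prod.ext (by dsimp only; field_simp; ring) rfl
  · exact Prod.ext rfl (by dsimp only; field_simp; ring)

theorem pdU_eq_of_hasDerivAt {X : ℝ × ℝ → Fin 3 → ℝ} {p : ℝ × ℝ} {v : Fin 3 → ℝ}
    (hX : DifferentiableAt ℝ X p) (h : HasDerivAt (fun r => X (r, p.2)) v p.1) :
    pdU X p = v :=
  (hX.hasFDerivAt.comp_hasDerivAt_of_eq p.1
    ((hasDerivAt_id p.1).prodMk (hasDerivAt_const p.1 p.2)) rfl).unique h

theorem pdV_eq_of_hasDerivAt {X : ℝ × ℝ → Fin 3 → ℝ} {p : ℝ × ℝ} {v : Fin 3 → ℝ}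
    (hX : DifferentiableAt ℝ X p) (h : HasDerivAt (fun t => X (p.1, t)) v p.2) :
    pdV X p = v :=
  (hX.hasFDerivAt.comp_hasDerivAt_of_eq p.2
    ((hasDerivAt_const p.2 p.1).prodMk (hasDerivAt_id p.2)) rfl).unique h

theorem abs_sinh_lt_cosh (θ : ℝ) : |sinh θ| < cosh θ :=
  abs_lt_of_sq_lt_sq (by rw [cosh_sq]; linarith) (cosh_pos θ).le

def hypAngle (x y : ℝ) : ℝ := arsinh (x / √(y ^ 2 - x ^ 2))

theorem hypAngle_mul_sinh_mul_cosh {r : ℝ} (hr : 0 < r) (θ : ℝ) :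
    hypAngle (r * sinh θ) (r * cosh θ) = θ := by
  have h : (r * cosh θ) ^ 2 - (r * sinh θ) ^ 2 = r ^ 2 := by
    linear_combination r ^ 2 * cosh_sq_sub_sinh_sq θ
  rw [hypAngle, h, sqrt_sq hr.le, mul_div_cancel_left₀ _ hr.ne', arsinh_sinh]

theorem sq_sub_sq_pos_of_abs_lt {x y : ℝ} (h : |x| < y) : 0 < y ^ 2 - x ^ 2 := by
  have := pow_lt_pow_left₀ h (abs_nonneg x) two_ne_zero
  rw [sq_abs] at this
  linarith

theorem sqrt_mul_sinh_hypAngle {x y : ℝ} (h : |x| < y) :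
    √(y ^ 2 - x ^ 2) * sinh (hypAngle x y) = x := by
  rw [hypAngle, sinh_arsinh, mul_div_cancel₀ _ (sqrt_pos.2 (sq_sub_sq_pos_of_abs_lt h)).ne']

theorem sqrt_mul_cosh_hypAngle {x y : ℝ} (h : |x| < y) :
    √(y ^ 2 - x ^ 2) * cosh (hypAngle x y) = y := by
  have hpos := sq_sub_sq_pos_of_abs_lt h
  rw [hypAngle, cosh_arsinh, ← sqrt_mul hpos.le, mul_add, mul_one, div_pow, sq_sqrt hpos.le,
    mul_div_cancel₀ _ hpos.ne', sub_add_cancel, sqrt_sq ((abs_nonneg x).trans h.le)]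

theorem contDiffOn_hypAngle {E : Type*} [NormedAddCommGroup E] [NormedSpace ℝ E] {x y : E → ℝ}
    {s : Set E} (hx : ContDiffOn ℝ (⊤:ℕ∞) x s) (hy : ContDiffOn ℝ (⊤:ℕ∞) y s)
    (hxy : ∀ e ∈ s, |x e| < y e) :
    ContDiffOn ℝ (⊤:ℕ∞) (fun e => hypAngle (x e) (y e)) s := by
  have hpos : ∀ e ∈ s, 0 < y e ^ 2 - x e ^ 2 := fun e he => sq_sub_sq_pos_of_abs_lt (hxy e he)
  exact contDiff_arsinh.comp_contDiffOn (hx.div (((hy.pow 2).sub (hx.pow 2)).sqrt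
    fun e he => (hpos e he).ne') fun e he => (sqrt_pos.2 (hpos e he)).ne')

theorem hasDerivAt_integral_of_continuousOn_Ioo {f : ℝ → ℝ} {c r : ℝ}
    (hf : ContinuousOn f (Ioo (-c) c)) (hr : r ∈ Ioo (-c) c) :
    HasDerivAt (fun u => ∫ τ in (0:ℝ)..u, f τ) (f r) r := by
  have h0 : (0:ℝ) ∈ Ioo (-c) c := ⟨by linarith [hr.1, hr.2], by linarith [hr.1, hr.2]⟩
  exact intervalIntegral.integral_hasDerivAt_right
    ((hf.mono (ordConnected_Ioo.uIcc_subset h0 hr)).intervalIntegrable)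
    (hf.stronglyMeasurableAtFilter isOpen_Ioo r hr) (hf.continuousAt (isOpen_Ioo.mem_nhds hr))

theorem contDiffOn_integral_of_contDiffOn_Ioo {f : ℝ → ℝ} {c : ℝ}
    (hf : ContDiffOn ℝ (⊤:ℕ∞) f (Ioo (-c) c)) :
    ContDiffOn ℝ (⊤:ℕ∞) (fun u => ∫ τ in (0:ℝ)..u, f τ) (Ioo (-c) c) := by
  have hF r (hr : r ∈ Ioo (-c) c) := hasDerivAt_integral_of_continuousOn_Ioo hf.continuousOn hr
  rw [contDiffOn_infty_iff_deriv_of_isOpen isOpen_Ioo]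
  exact ⟨fun r hr => (hF r hr).differentiableAt.differentiableWithinAt,
    hf.congr fun r hr => (hF r hr).deriv⟩

theorem integral_pow_mul_comp_sq (W : ℝ → ℝ) (m : ℕ) (r : ℝ) :
    ∫ τ in (0:ℝ)..r, τ ^ m * W (τ ^ 2) =
      r ^ (m + 1) * ∫ σ in (0:ℝ)..1, σ ^ m * W (r ^ 2 * σ ^ 2) := by
  have h := intervalIntegral.smul_integral_comp_mul_left (fun τ => τ ^ m * W (τ ^ 2)) r
    (a := 0) (b := 1)
  simp only [mul_zero, mul_one, smul_eq_mul, mul_pow] at h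
  rw [← h, ← intervalIntegral.integral_const_mul, ← intervalIntegral.integral_const_mul]
  congr 1
  ext σ
  ring

theorem mul_sq_mem_Icc {R x σ : ℝ} (hx : x ∈ Icc (-R) R) (hσ : σ ∈ Icc (0:ℝ) 1) :
    x * σ ^ 2 ∈ Icc (-R) R := by
  rw [mem_Icc, ← abs_le] at hx ⊢
  rw [abs_mul, abs_of_nonneg (sq_nonneg σ)]
  exact (mul_le_of_le_one_right (abs_nonneg x) (pow_le_one₀ hσ.1 hσ.2)).trans hx

theorem continuousOn_pow_mul_comp_mul_sq {f : ℝ → ℝ} {R x : ℝ}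
    (hf : ContinuousOn f (Icc (-R) R)) (hx : x ∈ Icc (-R) R) (j : ℕ) :
    ContinuousOn (fun σ => σ ^ j * f (x * σ ^ 2)) (Icc 0 1) :=
  (continuousOn_pow j).mul (hf.comp (by fun_prop) fun _ hσ => mul_sq_mem_Icc hx hσ)

theorem hasDerivAt_integral_pow_mul_comp_mul_sq {V : ℝ → ℝ} {c s₀ : ℝ} (m : ℕ)
    (hV : ContDiffOn ℝ 1 V (Ioo (-c) c)) (hs₀ : s₀ ∈ Ioo (-c) c) :
    HasDerivAt (fun s => ∫ σ in (0:ℝ)..1, σ ^ m * V (s * σ ^ 2))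
      (∫ σ in (0:ℝ)..1, σ ^ (m + 2) * deriv V (s₀ * σ ^ 2)) s₀ := by
  obtain ⟨R, hs₀R, hRc⟩ := exists_between (abs_lt.2 hs₀)
  have hK : Icc (-R) R ⊆ Ioo (-c) c := Icc_subset_Ioo (neg_lt_neg hRc) hRc
  have hN : Icc (-R) R ∈ 𝓝 s₀ := Icc_mem_nhds (abs_lt.1 hs₀R).1 (abs_lt.1 hs₀R).2
  have hs₀K : s₀ ∈ Icc (-R) R := mem_of_mem_nhds hN
  have hVK : ContinuousOn V (Icc (-R) R) := hV.continuousOn.mono hK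
  have hV'K : ContinuousOn (deriv V) (Icc (-R) R) :=
    (hV.continuousOn_deriv_of_isOpen isOpen_Ioo le_rfl).mono hK
  obtain ⟨C, hC⟩ := isCompact_Icc.exists_bound_of_continuousOn hV'K
  have hI : uIoc (0:ℝ) 1 ⊆ Icc 0 1 := by rw [uIoc_of_le zero_le_one]; exact Ioc_subset_Icc_self
  refine (intervalIntegral.hasDerivAt_integral_of_dominated_loc_of_deriv_le
    (F := fun x σ => σ ^ m * V (x * σ ^ 2)) (F' := fun x σ => σ ^ (m + 2) * deriv V (x * σ ^ 2))
    (μ := MeasureTheory.volume) (bound := fun _ => C) hN ?_ ?_ ?_ ?_ intervalIntegrable_const ?_).2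
  · filter_upwards [hN] with x hx
    exact ((continuousOn_pow_mul_comp_mul_sq hVK hx m).mono hI).aestronglyMeasurable
      measurableSet_uIoc
  · exact (continuousOn_pow_mul_comp_mul_sq hVK hs₀K m).intervalIntegrable_of_Icc zero_le_one
  · exact ((continuousOn_pow_mul_comp_mul_sq hV'K hs₀K (m + 2)).mono hI).aestronglyMeasurable
      measurableSet_uIoc
  · refine Eventually.of_forall fun σ hσ x hx => ?_
    have hσ' := hI hσ
    rw [norm_mul, norm_pow, norm_of_nonneg hσ'.1]
    exact (mul_le_of_le_one_left (norm_nonneg _) (pow_le_one₀ hσ'.1 hσ'.2)).trans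
      (hC _ (mul_sq_mem_Icc hx hσ'))
  · refine Eventually.of_forall fun σ hσ x hx => ?_
    have hVx : HasDerivAt V (deriv V (x * σ ^ 2)) (x * σ ^ 2) :=
      (hV.differentiableOn one_ne_zero _ (hK (mul_sq_mem_Icc hx (hI hσ)))).differentiableAt
        (isOpen_Ioo.mem_nhds (hK (mul_sq_mem_Icc hx (hI hσ)))) |>.hasDerivAt
    exact ((hVx.comp x (hasDerivAt_mul_const (σ ^ 2))).const_mul (σ ^ m)).congr_deriv (by ring)

theorem contDiffOn_nat_integral_pow_mul_comp_mul_sq {c : ℝ} (n m : ℕ) {V : ℝ → ℝ}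
    (hV : ContDiffOn ℝ (⊤:ℕ∞) V (Ioo (-c) c)) :
    ContDiffOn ℝ n (fun s => ∫ σ in (0:ℝ)..1, σ ^ m * V (s * σ ^ 2)) (Ioo (-c) c) := by
  induction n generalizing m V with
  | zero =>
    exact contDiffOn_zero.2 fun s hs =>
      (hasDerivAt_integral_pow_mul_comp_mul_sq m (hV.of_le (by simp)) hs).continuousAt
        |>.continuousWithinAt
  | succ n ih =>
    have hD s (hs : s ∈ Ioo (-c) c) :=
      hasDerivAt_integral_pow_mul_comp_mul_sq m (hV.of_le (by simp)) hs
    rw [Nat.cast_succ, contDiffOn_succ_iff_deriv_of_isOpen isOpen_Ioo]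
    exact ⟨fun s hs => (hD s hs).differentiableAt.differentiableWithinAt, by simp,
      (ih (m + 2) (hV.deriv_of_isOpen isOpen_Ioo (by simp))).congr fun s hs => (hD s hs).deriv⟩

theorem contDiffOn_integral_pow_mul_comp_mul_sq {c : ℝ} (m : ℕ) {V : ℝ → ℝ}
    (hV : ContDiffOn ℝ (⊤:ℕ∞) V (Ioo (-c) c)) :
    ContDiffOn ℝ (⊤:ℕ∞) (fun s => ∫ σ in (0:ℝ)..1, σ ^ m * V (s * σ ^ 2)) (Ioo (-c) c) :=
  contDiffOn_infty.2 fun n => contDiffOn_nat_integral_pow_mul_comp_mul_sq n m hV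

namespace ConjDelaunay

variable {H k : ℝ}

def Δsq (k s : ℝ) : ℝ := 2 * (k + 1) * s + (1 - k) ^ 2

def δsq (k s : ℝ) : ℝ := (s + k + 1) ^ 2 - 4 * k

theorem ΔT_eq (k r : ℝ) : ΔT k r = Δsq k (r ^ 2) := rfl

theorem δT_eq (k r : ℝ) : δT k r = δsq k (r ^ 2) := rfl

def halfWidth (k : ℝ) : ℝ := (1 - k) / √(2 * |1 + k|)

def lamWeight (k s : ℝ) : ℝ := √(2 * |1 + k|) / (√(δsq k s) * Δsq k s)

def lamQuot (k s : ℝ) : ℝ := ∫ σ in (0:ℝ)..1, σ ^ 4 * lamWeight k (s * σ ^ 2)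

def phaseInt (k r : ℝ) : ℝ := ∫ τ in (0:ℝ)..r, (1 - k) * (τ ^ 2 * lamWeight k (τ ^ 2))

theorem δsq_pos (hk : k < 0) (s : ℝ) : 0 < δsq k s := by
  have := sq_nonneg (s + k + 1)
  unfold δsq
  linarith

theorem halfWidth_sq (k : ℝ) : halfWidth k ^ 2 = (1 - k) ^ 2 / (2 * |1 + k|) := by
  rw [halfWidth, div_pow, sq_sqrt (by positivity)]

theorem halfWidth_pos (hk : k < -1) : 0 < halfWidth k :=
  div_pos (by linarith) (sqrt_pos.2 (mul_pos two_pos (abs_pos.2 (by linarith))))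

theorem sqrt_abs_one_add_div_two_ne_zero (hk : k + 1 ≠ 0) : √(|1 + k| / 2) ≠ 0 :=
  (sqrt_pos.2 (div_pos (abs_pos.2 (by rwa [add_comm])) two_pos)).ne'

theorem Δsq_pos (hk : k < -1) {s : ℝ} (hs : s < halfWidth k ^ 2) : 0 < Δsq k s := by
  rw [halfWidth_sq, abs_of_neg (by linarith : 1 + k < 0), lt_div_iff₀ (by linarith)] at hs
  unfold Δsq
  linarith

theorem ΔT_pos (hk : k < -1) {r : ℝ} (hr : |r| < halfWidth k) : 0 < ΔT k r :=
  Δsq_pos hk (sq_lt_sq' (abs_lt.1 hr).1 (abs_lt.1 hr).2)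

theorem sq_mem_Ioo_halfWidth_sq (hk : k < -1) {r : ℝ} (hr : r ∈ Ioo (-halfWidth k) (halfWidth k)) :
    r ^ 2 ∈ Ioo (-halfWidth k ^ 2) (halfWidth k ^ 2) :=
  ⟨(neg_neg_of_pos (pow_pos (halfWidth_pos hk) 2)).trans_le (sq_nonneg r), sq_lt_sq' hr.1 hr.2⟩

theorem lamWeight_pos (hk : k < -1) {s : ℝ} (hs : s < halfWidth k ^ 2) : 0 < lamWeight k s :=
  div_pos (sqrt_pos.2 (mul_pos two_pos (abs_pos.2 (by linarith))))
    (mul_pos (sqrt_pos.2 (δsq_pos (by linarith) s)) (Δsq_pos hk hs))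

theorem contDiffOn_lamWeight (hk : k < -1) :
    ContDiffOn ℝ (⊤:ℕ∞) (lamWeight k) (Ioo (-halfWidth k ^ 2) (halfWidth k ^ 2)) := by
  have hδ : ContDiff ℝ (⊤:ℕ∞) fun s => √(δsq k s) :=
    ContDiff.sqrt (by unfold δsq; fun_prop) fun s => (δsq_pos (by linarith) s).ne'
  exact contDiffOn_const.div (hδ.contDiffOn.mul (by unfold Δsq; fun_prop))
    fun s hs => (mul_pos (sqrt_pos.2 (δsq_pos (by linarith) s)) (Δsq_pos hk hs.2)).ne'

theorem contDiffOn_pow_mul_lamWeight_sq (hk : k < -1) (m : ℕ) :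
    ContDiffOn ℝ (⊤:ℕ∞) (fun τ => τ ^ m * lamWeight k (τ ^ 2))
      (Ioo (-halfWidth k) (halfWidth k)) :=
  (contDiff_id.pow m).contDiffOn.mul ((contDiffOn_lamWeight hk).comp (contDiff_id.pow 2).contDiffOn
    fun _ hτ => sq_mem_Ioo_halfWidth_sq hk hτ)

theorem contDiffOn_lamQuot (hk : k < -1) :
    ContDiffOn ℝ (⊤:ℕ∞) (lamQuot k) (Ioo (-halfWidth k ^ 2) (halfWidth k ^ 2)) :=
  contDiffOn_integral_pow_mul_comp_mul_sq 4 (contDiffOn_lamWeight hk)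

theorem lamQuot_zero (k : ℝ) : lamQuot k 0 = lamWeight k 0 / 5 := by
  simp only [lamQuot, zero_mul, intervalIntegral.integral_mul_const, integral_pow]
  ring

theorem lam12_eq_integral (H k : ℝ) :
    lam12 H k = fun r => ∫ τ in (0:ℝ)..r, H⁻¹ * (τ ^ 4 * lamWeight k (τ ^ 2)) := by
  ext r
  simp only [lam12, lamWeight, δT_eq, ΔT_eq]
  congr 1
  ext τ
  ring

theorem lam12_eq (H k r : ℝ) : lam12 H k r = lamQuot k (r ^ 2) / H * r ^ 5 := by
  rw [lam12_eq_integral]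
  dsimp only
  rw [intervalIntegral.integral_const_mul, integral_pow_mul_comp_sq, lamQuot]
  ring

theorem φ12_eq (H k r t : ℝ) : φ12 H k r t = -phaseInt k r - √(|1 + k| / 2) * t := by
  simp only [φ12, phaseInt, lamWeight, δT_eq, ΔT_eq]
  congr 3
  ext τ
  ring

theorem hasDerivAt_phaseInt (hk : k < -1) {r : ℝ} (hr : |r| < halfWidth k) :
    HasDerivAt (phaseInt k) ((1 - k) * (r ^ 2 * lamWeight k (r ^ 2))) r :=
  hasDerivAt_integral_of_continuousOn_Ioo
    (continuousOn_const.mul (contDiffOn_pow_mul_lamWeight_sq hk 2).continuousOn) (abs_lt.1 hr)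

theorem contDiffOn_phaseInt (hk : k < -1) :
    ContDiffOn ℝ (⊤:ℕ∞) (phaseInt k) (Ioo (-halfWidth k) (halfWidth k)) :=
  contDiffOn_integral_of_contDiffOn_Ioo
    (contDiffOn_const.mul (contDiffOn_pow_mul_lamWeight_sq hk 2))

theorem hasDerivAt_lam12 (hk : k < -1) {r : ℝ} (hr : |r| < halfWidth k) :
    HasDerivAt (lam12 H k) (H⁻¹ * (r ^ 4 * lamWeight k (r ^ 2))) r := by
  rw [lam12_eq_integral]
  exact hasDerivAt_integral_of_continuousOn_Ioo
    (continuousOn_const.mul (contDiffOn_pow_mul_lamWeight_sq hk 4).continuousOn) (abs_lt.1 hr)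

theorem hasDerivAt_ρ12 {r : ℝ} (hΔ : 0 < ΔT k r) :
    HasDerivAt (ρ12 H k) (2 * (k + 1) * r / (√(ΔT k r) * (2 * H * |k + 1|))) r := by
  have hΔ' : HasDerivAt (ΔT k) (2 * (k + 1) * (2 * r)) r :=
    ((hasDerivAt_pow 2 r).const_mul _).add_const _ |>.congr_deriv (by norm_num)
  exact ((hΔ'.sqrt hΔ.ne').div_const _).congr_deriv (by ring)

section Derivatives

variable {p : ℝ × ℝ} {ρ' G' l' : ℝ}

theorem differentiableAt_X12 (hρ : HasDerivAt (ρ12 H k) ρ' p.1)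
    (hG : HasDerivAt (phaseInt k) G' p.1) (hl : HasDerivAt (lam12 H k) l' p.1) :
    DifferentiableAt ℝ (X12 H k) p := by
  have hφ : DifferentiableAt ℝ (fun q : ℝ × ℝ => φ12 H k q.1 q.2) p := by
    simp only [φ12_eq]
    exact ((hG.differentiableAt.comp p differentiableAt_fst).neg).sub
      (differentiableAt_snd.const_mul _)
  have hρq := hρ.differentiableAt.comp p differentiableAt_fst
  have hlq := hl.differentiableAt.comp p differentiableAt_fst
  refine differentiableAt_pi.2 fun i => ?_
  fin_cases i
  · exact hρq.mul hφ.sinh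
  · exact hρq.mul hφ.cosh
  · exact hlq.add (hφ.const_mul _)

theorem pdU_X12 (hρ : HasDerivAt (ρ12 H k) ρ' p.1) (hG : HasDerivAt (phaseInt k) G' p.1)
    (hl : HasDerivAt (lam12 H k) l' p.1) :
    pdU (X12 H k) p =
      ![ρ' * sinh (φ12 H k p.1 p.2) - ρ12 H k p.1 * G' * cosh (φ12 H k p.1 p.2),
        ρ' * cosh (φ12 H k p.1 p.2) - ρ12 H k p.1 * G' * sinh (φ12 H k p.1 p.2),
        l' - h12 H k * G'] := by
  refine pdU_eq_of_hasDerivAt (differentiableAt_X12 hρ hG hl) (hasDerivAt_pi.2 fun i => ?_)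
  have hφ : HasDerivAt (fun r => φ12 H k r p.2) (-G') p.1 := by
    simp only [φ12_eq]
    exact hG.neg.sub_const _
  fin_cases i
  all_goals simp only [X12, Fin.zero_eta, Fin.mk_one, Fin.reduceFinMk, Matrix.cons_val]
  · exact (hρ.mul hφ.sinh).congr_deriv (by ring)
  · exact (hρ.mul hφ.cosh).congr_deriv (by ring)
  · exact (hl.add (hφ.const_mul _)).congr_deriv (by ring)

theorem pdV_X12 (hρ : HasDerivAt (ρ12 H k) ρ' p.1) (hG : HasDerivAt (phaseInt k) G' p.1)
    (hl : HasDerivAt (lam12 H k) l' p.1) :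
    pdV (X12 H k) p = -√(|1 + k| / 2) •
      ![ρ12 H k p.1 * cosh (φ12 H k p.1 p.2), ρ12 H k p.1 * sinh (φ12 H k p.1 p.2), h12 H k] := by
  refine pdV_eq_of_hasDerivAt (differentiableAt_X12 hρ hG hl) (hasDerivAt_pi.2 fun i => ?_)
  have hφ : HasDerivAt (fun t => φ12 H k p.1 t) (-√(|1 + k| / 2)) p.2 := by
    simp only [φ12_eq]
    exact ((hasDerivAt_id p.2).const_mul _).const_sub _ |>.congr_deriv (by ring)
  fin_cases i
  all_goals simp only [X12, Fin.zero_eta, Fin.mk_one, Fin.reduceFinMk, Matrix.cons_val,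
    Pi.smul_apply, smul_eq_mul]
  · exact (hφ.sinh.const_mul _).congr_deriv (by ring)
  · exact (hφ.cosh.const_mul _).congr_deriv (by ring)
  · exact ((hφ.const_mul _).const_add _).congr_deriv (by ring)

end Derivatives

theorem isSingularPt_X12_iff (hH : H ≠ 0) (hk : k < -1) {p : ℝ × ℝ} (hp : p ∈ D12 k) :
    IsSingularPt (X12 H k) p ↔ p.1 = 0 := by
  have hk₁ : k + 1 ≠ 0 := by linarith
  have hk₁' : 1 + k ≠ 0 := by linarith
  have hΔ := ΔT_pos hk hp
  have hρ := hasDerivAt_ρ12 (H := H) hΔ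
  have hG := hasDerivAt_phaseInt hk hp
  have hl := hasDerivAt_lam12 (H := H) hk hp
  rw [IsSingularPt, pdU_X12 hρ hG hl, pdV_X12 hρ hG hl]
  set φ := φ12 H k p.1 p.2
  constructor
  · intro hsing
    by_contra hr
    set ρ' := 2 * (k + 1) * p.1 / (√(ΔT k p.1) * (2 * H * |k + 1|))
    have hρ' : ρ' ≠ 0 := div_ne_zero (mul_ne_zero (mul_ne_zero two_ne_zero hk₁) hr)
      (mul_ne_zero (sqrt_pos.2 hΔ).ne' (mul_ne_zero (mul_ne_zero two_ne_zero hH)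
        (abs_ne_zero.2 hk₁)))
    have hh : h12 H k ≠ 0 := div_ne_zero (by linarith : (0:ℝ) < 1 - k).ne'
      (mul_ne_zero (mul_ne_zero two_ne_zero hH) (abs_ne_zero.2 hk₁'))
    refine hsing (linearIndependent_pair_of_apply
      (cosh φ • LinearMap.proj 1 - sinh φ • LinearMap.proj 0) ?_ ?_
      (smul_ne_zero (neg_ne_zero.2 (sqrt_abs_one_add_div_two_ne_zero hk₁))
        fun h => hh (congr_fun h 2)))
    · intro h0
      simp only [LinearMap.sub_apply, LinearMap.smul_apply, LinearMap.coe_proj, Function.eval,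
        Matrix.cons_val_one, Matrix.cons_val_zero, smul_eq_mul] at h0
      exact hρ' (by linear_combination h0 - ρ' * cosh_sq_sub_sinh_sq φ)
    · simp only [LinearMap.sub_apply, LinearMap.smul_apply, LinearMap.coe_proj, Function.eval,
        Matrix.cons_val_one, Matrix.cons_val_zero, Pi.smul_apply, smul_eq_mul]
      ring
  · intro hr hli
    exact hli.ne_zero 0 (by simp [hr])

def scale (H k : ℝ) : ℝ := 2 * H * |k + 1|

def sqCoord (H k : ℝ) (w : Fin 3 → ℝ) : ℝ :=
  ((scale H k * w 1) ^ 2 - (scale H k * w 0) ^ 2 - (1 - k) ^ 2) / (2 * (k + 1))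

def angleCoord (H k : ℝ) (w : Fin 3 → ℝ) : ℝ := hypAngle (scale H k * w 0) (scale H k * w 1)

def cuspParam (H k θ₀ : ℝ) (m : Fin 3 → ℝ) : Fin 3 → ℝ :=
  ![√(Δsq k (m 1)) / scale H k * sinh (m 0 + θ₀), √(Δsq k (m 1)) / scale H k * cosh (m 0 + θ₀),
    lamQuot k (m 1) / H * m 2 + h12 H k * (m 0 + θ₀)]

def cuspCoord (H k θ₀ : ℝ) (w : Fin 3 → ℝ) : Fin 3 → ℝ :=
  ![angleCoord H k w - θ₀, sqCoord H k w,
    (w 2 - h12 H k * angleCoord H k w) / (lamQuot k (sqCoord H k w) / H)]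

def paramDomain (c : ℝ) : Set (Fin 3 → ℝ) := {m | |m 1| < c}

def coordDomain (H k c : ℝ) : Set (Fin 3 → ℝ) :=
  {w | |scale H k * w 0| < scale H k * w 1 ∧ |sqCoord H k w| < c}

theorem scale_ne_zero (hH : H ≠ 0) (hk : k + 1 ≠ 0) : scale H k ≠ 0 :=
  mul_ne_zero (mul_ne_zero two_ne_zero hH) (abs_ne_zero.2 hk)

theorem Δsq_sqCoord (hk : k + 1 ≠ 0) (w : Fin 3 → ℝ) :
    Δsq k (sqCoord H k w) = (scale H k * w 1) ^ 2 - (scale H k * w 0) ^ 2 := by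
  rw [Δsq, sqCoord, mul_div_cancel₀ _ (mul_ne_zero two_ne_zero hk)]
  ring

theorem scale_mul_cuspParam (hH : H ≠ 0) (hk : k + 1 ≠ 0) (θ₀ : ℝ) (m : Fin 3 → ℝ) :
    scale H k * cuspParam H k θ₀ m 0 = √(Δsq k (m 1)) * sinh (m 0 + θ₀) ∧
      scale H k * cuspParam H k θ₀ m 1 = √(Δsq k (m 1)) * cosh (m 0 + θ₀) := by
  simp only [cuspParam, Matrix.cons_val_zero, Matrix.cons_val_one]
  constructor <;> field_simp [scale_ne_zero hH hk]

variable {c θ₀ : ℝ}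

theorem Δsq_pos_of_abs_lt (hk : k < -1) (hc : c ≤ halfWidth k ^ 2) {s : ℝ} (hs : |s| < c) :
    0 < Δsq k s :=
  Δsq_pos hk ((le_abs_self s).trans_lt (hs.trans_le hc))

theorem cuspCoord_cuspParam (hH : H ≠ 0) (hk : k < -1) (hc : c ≤ halfWidth k ^ 2)
    (hL : ∀ s, |s| < c → lamQuot k s ≠ 0) {m : Fin 3 → ℝ} (hm : m ∈ paramDomain c) :
    cuspParam H k θ₀ m ∈ coordDomain H k c ∧ cuspCoord H k θ₀ (cuspParam H k θ₀ m) = m := by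
  have hk₁ : k + 1 ≠ 0 := by linarith
  have hΔ := Δsq_pos_of_abs_lt hk hc hm
  obtain ⟨h0, h1⟩ := scale_mul_cuspParam hH hk₁ θ₀ m
  have hsq : sqCoord H k (cuspParam H k θ₀ m) = m 1 := by
    rw [sqCoord, h0, h1, div_eq_iff (mul_ne_zero two_ne_zero hk₁)]
    have hΔdef : Δsq k (m 1) = 2 * (k + 1) * m 1 + (1 - k) ^ 2 := rfl
    linear_combination √(Δsq k (m 1)) ^ 2 * cosh_sq_sub_sinh_sq (m 0 + θ₀) + sq_sqrt hΔ.le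
      + hΔdef
  have hangle : angleCoord H k (cuspParam H k θ₀ m) = m 0 + θ₀ := by
    rw [angleCoord, h0, h1, hypAngle_mul_sinh_mul_cosh (sqrt_pos.2 hΔ)]
  refine ⟨⟨?_, hsq ▸ hm⟩, ?_⟩
  · rw [h0, h1, abs_mul, abs_of_pos (sqrt_pos.2 hΔ)]
    exact mul_lt_mul_of_pos_left (abs_sinh_lt_cosh _) (sqrt_pos.2 hΔ)
  · have hL' : lamQuot k (m 1) / H ≠ 0 := div_ne_zero (hL _ hm) hH
    ext i
    fin_cases i
    · simp [cuspCoord, hangle]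
    · simp [cuspCoord, hsq]
    · show (cuspParam H k θ₀ m 2 - h12 H k * angleCoord H k (cuspParam H k θ₀ m)) /
        (lamQuot k (sqCoord H k (cuspParam H k θ₀ m)) / H) = m 2
      have h2 : cuspParam H k θ₀ m 2 = lamQuot k (m 1) / H * m 2 + h12 H k * (m 0 + θ₀) := rfl
      rw [hangle, hsq, h2, add_sub_cancel_right, mul_div_cancel_left₀ _ hL']

theorem cuspParam_cuspCoord (hH : H ≠ 0) (hk : k + 1 ≠ 0) (hL : ∀ s, |s| < c → lamQuot k s ≠ 0)
    {w : Fin 3 → ℝ} (hw : w ∈ coordDomain H k c) : cuspParam H k θ₀ (cuspCoord H k θ₀ w) = w := by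
  obtain ⟨hxy, hs⟩ := hw
  have ha := scale_ne_zero hH hk
  ext i
  fin_cases i
  · show √(Δsq k (sqCoord H k w)) / scale H k * sinh (angleCoord H k w - θ₀ + θ₀) = w 0
    rw [sub_add_cancel, Δsq_sqCoord hk, div_mul_eq_mul_div, angleCoord,
      sqrt_mul_sinh_hypAngle hxy, mul_div_cancel_left₀ _ ha]
  · show √(Δsq k (sqCoord H k w)) / scale H k * cosh (angleCoord H k w - θ₀ + θ₀) = w 1
    rw [sub_add_cancel, Δsq_sqCoord hk, div_mul_eq_mul_div, angleCoord,
      sqrt_mul_cosh_hypAngle hxy, mul_div_cancel_left₀ _ ha]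
  · show lamQuot k (sqCoord H k w) / H *
        ((w 2 - h12 H k * angleCoord H k w) / (lamQuot k (sqCoord H k w) / H)) +
        h12 H k * (angleCoord H k w - θ₀ + θ₀) = w 2
    rw [sub_add_cancel, mul_div_cancel₀ _ (div_ne_zero (hL _ hs) hH), sub_add_cancel]

theorem contDiffOn_cuspParam (hk : k < -1) (hc : c ≤ halfWidth k ^ 2) :
    ContDiffOn ℝ (⊤:ℕ∞) (cuspParam H k θ₀) (paramDomain c) := by
  have hρ : ContDiffOn ℝ (⊤:ℕ∞) (fun m : Fin 3 → ℝ => √(Δsq k (m 1)) / scale H k)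
      (paramDomain c) :=
    (ContDiffOn.sqrt (by unfold Δsq; fun_prop)
      fun m hm => (Δsq_pos_of_abs_lt hk hc hm).ne').div_const _
  have hL : ContDiffOn ℝ (⊤:ℕ∞) (fun m : Fin 3 → ℝ => lamQuot k (m 1)) (paramDomain c) :=
    (contDiffOn_lamQuot hk).comp (by fun_prop) fun m hm => abs_lt.1 (hm.trans_le hc)
  refine contDiffOn_pi.2 fun i => ?_
  fin_cases i
  · exact hρ.mul (by fun_prop)
  · exact hρ.mul (by fun_prop)
  · exact ((hL.div_const H).mul (by fun_prop)).add (by fun_prop)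

theorem contDiffOn_cuspCoord (hH : H ≠ 0) (hk : k < -1) (hc : c ≤ halfWidth k ^ 2)
    (hL : ∀ s, |s| < c → lamQuot k s ≠ 0) :
    ContDiffOn ℝ (⊤:ℕ∞) (cuspCoord H k θ₀) (coordDomain H k c) := by
  have hangle : ContDiffOn ℝ (⊤:ℕ∞) (angleCoord H k) (coordDomain H k c) :=
    contDiffOn_hypAngle (by fun_prop) (by fun_prop) fun w hw => hw.1
  have hsq : ContDiff ℝ (⊤:ℕ∞) (sqCoord H k) := by unfold sqCoord; fun_prop
  have hL' : ContDiffOn ℝ (⊤:ℕ∞) (fun w => lamQuot k (sqCoord H k w)) (coordDomain H k c) :=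
    (contDiffOn_lamQuot hk).comp hsq.contDiffOn fun w hw => abs_lt.1 (hw.2.trans_le hc)
  refine contDiffOn_pi.2 fun i => ?_
  fin_cases i
  · exact hangle.sub contDiffOn_const
  · exact hsq.contDiffOn
  · exact (ContDiffOn.sub (f := fun w : Fin 3 → ℝ => w 2) (by fun_prop)
      (contDiffOn_const.mul hangle)).div (hL'.div_const H) fun w hw => div_ne_zero (hL _ hw.2) hH

theorem isOpen_coordDomain (H k c : ℝ) : IsOpen (coordDomain H k c) := by
  have h₁ : IsOpen {w : Fin 3 → ℝ | |scale H k * w 0| < scale H k * w 1} :=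
    isOpen_lt (by fun_prop) (by fun_prop)
  have h₂ : IsOpen {w : Fin 3 → ℝ | |sqCoord H k w| < c} :=
    isOpen_lt (by unfold sqCoord; fun_prop) continuous_const
  exact h₁.inter h₂

theorem isDiffeoOn_cuspCoord (hH : H ≠ 0) (hk : k < -1) (hc : c ≤ halfWidth k ^ 2)
    (hL : ∀ s, |s| < c → lamQuot k s ≠ 0) :
    IsDiffeoOn (cuspCoord H k θ₀) (coordDomain H k c) (paramDomain c) :=
  IsDiffeoOn.of_invOn (g := cuspParam H k θ₀)
    (isOpen_coordDomain H k c) (isOpen_lt (by fun_prop) continuous_const)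
    (contDiffOn_cuspCoord hH hk hc hL) (contDiffOn_cuspParam hk hc) (fun _ hw => hw.2)
    (fun _ hm => (cuspCoord_cuspParam hH hk hc hL hm).1)
    ⟨fun _ hw => cuspParam_cuspCoord hH (by linarith) hL hw,
      fun _ hm => (cuspCoord_cuspParam hH hk hc hL hm).2⟩

def shearChart (k θ₀ : ℝ) (w : ℝ × ℝ) : ℝ × ℝ :=
  (w.2, (-phaseInt k w.2 - θ₀ - w.1) / √(|1 + k| / 2))

theorem X12_shearChart (hk : k + 1 ≠ 0) (θ₀ : ℝ) (w : ℝ × ℝ) :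
    X12 H k (shearChart k θ₀ w) = cuspParam H k θ₀ ![w.1, w.2 ^ 2, w.2 ^ 5] := by
  have hβ := sqrt_abs_one_add_div_two_ne_zero hk
  have hφ : φ12 H k w.2 ((-phaseInt k w.2 - θ₀ - w.1) / √(|1 + k| / 2)) = w.1 + θ₀ := by
    rw [φ12_eq]
    field_simp
    ring
  ext i
  fin_cases i
  all_goals simp only [X12, shearChart, cuspParam, hφ, Fin.zero_eta, Fin.mk_one, Fin.reduceFinMk,
    Matrix.cons_val]
  · rfl
  · rfl
  · rw [lam12_eq]

theorem exists_lamQuot_ne_zero (hk : k < -1) :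
    ∃ δ, 0 < δ ∧ δ < halfWidth k ∧ ∀ s, |s| < δ ^ 2 → lamQuot k s ≠ 0 := by
  have hw := halfWidth_pos hk
  have hw2 : 0 < halfWidth k ^ 2 := pow_pos hw 2
  have hcont : ContinuousAt (lamQuot k) 0 :=
    (contDiffOn_lamQuot hk).continuousOn.continuousAt (Ioo_mem_nhds (neg_neg_of_pos hw2) hw2)
  have h0 : lamQuot k 0 ≠ 0 := by
    rw [lamQuot_zero]
    exact (div_pos (lamWeight_pos hk hw2) (by norm_num)).ne'
  obtain ⟨ε, hε, hball⟩ := Metric.eventually_nhds_iff.1 (hcont.eventually_ne h0)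
  set δ := min 1 (min ε (halfWidth k / 2))
  have hδ : 0 < δ := by positivity
  have hδε : δ ^ 2 ≤ ε := by
    have h1 : δ ≤ 1 := min_le_left _ _
    have h2 : δ ≤ ε := (min_le_right _ _).trans (min_le_left _ _)
    nlinarith
  refine ⟨δ, hδ, ?_, fun s hs => hball ?_⟩
  · exact (min_le_right _ _).trans_lt ((min_le_right _ _).trans_lt (half_lt_self hw))
  · rw [dist_zero_right, norm_eq_abs]
    exact hs.trans_le hδε

theorem isCuspidalEdge25_X12 (hH : H ≠ 0) (hk : k < -1) {p : ℝ × ℝ} (hp : p.1 = 0) :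
    IsCuspidalEdge25 (D12 k) (X12 H k) p := by
  obtain ⟨δ, hδ, hδw, hL⟩ := exists_lamQuot_ne_zero hk
  have hc : δ ^ 2 ≤ halfWidth k ^ 2 := pow_le_pow_left₀ hδ.le hδw.le 2
  have hk₁ : k + 1 ≠ 0 := by linarith
  have hβ := sqrt_abs_one_add_div_two_ne_zero hk₁
  set θ₀ := φ12 H k p.1 p.2
  have hshear : IsDiffeoOn (shearChart k θ₀) {w | w.2 ∈ Ioo (-δ) δ} {q | q.1 ∈ Ioo (-δ) δ} :=
    isDiffeoOn_shear (f := fun v => -phaseInt k v - θ₀) isOpen_Ioo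
      (((contDiffOn_phaseInt hk).mono (Ioo_subset_Ioo (neg_le_neg hδw.le) hδw.le)).neg.sub
        contDiffOn_const) hβ
  have hmaps : ∀ w : ℝ × ℝ, w.2 ∈ Ioo (-δ) δ →
      X12 H k (shearChart k θ₀ w) ∈ coordDomain H k (δ ^ 2) ∧
        cuspCoord H k θ₀ (X12 H k (shearChart k θ₀ w)) = ![w.1, w.2 ^ 2, w.2 ^ 5] := by
    intro w hw
    rw [X12_shearChart hk₁]
    refine cuspCoord_cuspParam hH hk hc hL ?_
    show |w.2 ^ 2| < δ ^ 2
    rw [abs_of_nonneg (sq_nonneg _)]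
    exact sq_lt_sq' hw.1 hw.2
  have hzero : ((0:ℝ), (0:ℝ)).2 ∈ Ioo (-δ) δ := ⟨neg_neg_of_pos hδ, hδ⟩
  have hp' : shearChart k θ₀ (0, 0) = p := by
    have hG0 : phaseInt k 0 = 0 := intervalIntegral.integral_same
    refine Prod.ext hp.symm ?_
    simp only [shearChart, θ₀, φ12_eq, hp, hG0]
    field_simp
    ring
  refine ⟨_, _, _, _, _, _, hzero, hp', fun q hq => ?_, hshear, hp' ▸ (hmaps _ hzero).1,
    isDiffeoOn_cuspCoord hH hk hc hL, hmaps⟩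
  show |q.1| < halfWidth k
  exact abs_lt.2 ⟨by linarith [hq.1], by linarith [hq.2]⟩

end ConjDelaunay

open ConjDelaunay

/-- The singular points of the conjugate of a spacelike Delaunay surface with timelike
axis (`k < −1`) are exactly the points with `r = 0`, and every singular point is a
(2,5)-cuspidal edge. -/
theorem conj_delaunay_timelike_cuspidal25' (H k : ℝ) (hH : H ≠ 0) (hk : k < -1) :
    (∀ r : ℝ, 0 < δT k r) ∧
    (∀ r : ℝ, |r| < (1 - k) / Real.sqrt (2 * |1 + k|) → 0 < ΔT k r) ∧
    (∀ p ∈ D12 k, (IsSingularPt (X12 H k) p ↔ p.1 = 0)) ∧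
    (∀ p ∈ D12 k, IsSingularPt (X12 H k) p → IsCuspidalEdge25 (D12 k) (X12 H k) p) :=
  ⟨fun r => δsq_pos (by linarith) _, fun _ hr => ΔT_pos hk hr,
    fun _ hp => isSingularPt_X12_iff hH hk hp,
    fun _ hp hsing => isCuspidalEdge25_X12 hH hk ((isSingularPt_X12_iff hH hk hp).1 hsing)⟩
end
end

section
/- Let H ≠ 0 and k > −1 with k ≠ 1, and let X(r,t) = (λ(r) + h·φ(r,t), ρ(r)·cos φ(r,t), ρ(r)·sin φ(r,t)) with δ(r) = (r² + k + 1)² − 4k, Δ(r) = 2(k+1)r² + (1−k)², h = (1−k)/(2H(1+k)), ρ(r) = √Δ(r)/(2H(k+1)), λ(r) = ∫₀^r √(2(1+k))·τ⁴/(H√δ(τ)·Δ(τ)) dτ, φ(r,t) = ∫₀^r √(2(1+k))·(1−k)·τ²/(√δ(τ)·Δ(τ)) dτ − √((1+k)/2)·t. Then for every t ∈ ℝ, det(X_t, X_{rr}, X_{rrr})(0, t) = 0. -/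
noncomputable section

open Set

/-- `h = (1−k)/(2H(1+k))`. -/
def hT (H k : ℝ) : ℝ := (1 - k) / (2 * H * (1 + k))

/-- `ρ(r) = √Δ(r)/(2H(k+1))`. -/
def ρT (H k r : ℝ) : ℝ := Real.sqrt (ΔT k r) / (2 * H * (k + 1))

/-- `λ(r) = ∫₀^r √(2(1+k))·τ⁴/(H√δ(τ)·Δ(τ)) dτ`. -/
def lamT (H k r : ℝ) : ℝ :=
  ∫ τ in (0:ℝ)..r, Real.sqrt (2 * (1 + k)) * τ ^ 4 / (H * Real.sqrt (δT k τ) * ΔT k τ)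

/-- `φ(r,t) = ∫₀^r √(2(1+k))·(1−k)·τ²/(√δ(τ)·Δ(τ)) dτ − √((1+k)/2)·t`. -/
def φT (H k r t : ℝ) : ℝ :=
  (∫ τ in (0:ℝ)..r,
      Real.sqrt (2 * (1 + k)) * (1 - k) * τ ^ 2 / (Real.sqrt (δT k τ) * ΔT k τ))
    - Real.sqrt ((1 + k) / 2) * t

/-- The conjugate of the spacelike Delaunay surface with timelike axis (`k > −1`):
`X(r,t) = (λ(r) + h·φ(r,t), ρ(r)·cos φ(r,t), ρ(r)·sin φ(r,t))`. -/
def XT (H k : ℝ) (p : ℝ × ℝ) : Fin 3 → ℝ :=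
  ![lamT H k p.1 + hT H k * φT H k p.1 p.2,
    ρT H k p.1 * Real.cos (φT H k p.1 p.2),
    ρT H k p.1 * Real.sin (φT H k p.1 p.2)]


/-!
`X` is a helicoidal surface: the profile curve `r ↦ (λ(r), ρ(r), 0)` moved by the screw motion
of pitch `h` through the angle `φ(r, t) = Φ(r) − s·t`. Since `λ'` and `Φ'` carry the factors `r⁴`
and `r²`, at `r = 0` we have `λ'' = λ''' = 0` and `Φ' = Φ'' = 0`. There `X_rr = ρ''·e` and
`X_rrr = ρ'''·e − (Φ'''/s)·X_t` with `e = (0, cos φ, sin φ)`, so `X_t`, `X_rr`, `X_rrr` are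
linearly dependent.
-/

open scoped ContDiff

section IteratedDeriv

variable {𝕜 : Type*} [NontriviallyNormedField 𝕜]

theorem iteratedDeriv_pow_mul_eq_zero {u : 𝕜 → 𝕜} {m n : ℕ} (hu : ContDiffAt 𝕜 m u 0)
    (hmn : m < n) : iteratedDeriv m (fun x => x ^ n * u x) 0 = 0 := by
  rw [iteratedDeriv_fun_mul (f := fun x => x ^ n) (by fun_prop) hu]
  refine Finset.sum_eq_zero fun i hi => ?_
  rw [iteratedDeriv_fun_pow_zero, if_neg (by grind)]
  simp

theorem iteratedDeriv_succ_sub_const (f : 𝕜 → 𝕜) (c : 𝕜) (n : ℕ) :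
    iteratedDeriv (n + 1) (fun x => f x - c) = iteratedDeriv (n + 1) f := by
  rw [iteratedDeriv_succ', iteratedDeriv_succ']
  congr 1
  funext y
  exact deriv_sub_const c

theorem iteratedDeriv_comp_eq_of_flat {f ψ : 𝕜 → 𝕜} {x : 𝕜} (hf : ContDiff 𝕜 ∞ f)
    (hψ : ContDiff 𝕜 ∞ ψ) {n : ℕ} (hflat : ∀ j, 0 < j → j ≤ n → iteratedDeriv j ψ x = 0) :
    iteratedDeriv (n + 1) (f ∘ ψ) x = deriv f (ψ x) * iteratedDeriv (n + 1) ψ x := by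
  induction n using Nat.strong_induction_on generalizing f with
  | _ n ih =>
    have hf' : ContDiff 𝕜 ∞ (deriv f) := (contDiff_infty_iff_deriv.mp hf).2
    have hψ' : ContDiff 𝕜 ∞ (deriv ψ) := (contDiff_infty_iff_deriv.mp hψ).2
    have hchain : deriv (f ∘ ψ) = (deriv f ∘ ψ) * deriv ψ :=
      funext fun y => deriv_comp y (hf.differentiable (by simp) _) (hψ.differentiable (by simp) _)
    -- Leibniz for `(f' ∘ ψ) · ψ'`; the terms differentiating `f' ∘ ψ` vanish by induction.
    rw [iteratedDeriv_succ', hchain,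
      iteratedDeriv_mul (contDiff_infty.1 (hf'.comp hψ) n).contDiffAt
        (contDiff_infty.1 hψ' n).contDiffAt,
      Finset.sum_range_succ', Finset.sum_eq_zero]
    · simp [iteratedDeriv_succ']
    intro i hi
    rw [ih i (by grind) hf' fun j hj hji => hflat j hj (by grind),
      hflat (i + 1) (by omega) (by grind)]
    simp

theorem iteratedDeriv_mul_eq_of_flat {ρ g : 𝕜 → 𝕜} {x : 𝕜} (hρ : ContDiff 𝕜 ∞ ρ)
    (hg : ContDiff 𝕜 ∞ g) {n : ℕ} (hflat : ∀ j, 0 < j → j ≤ n → iteratedDeriv j g x = 0) :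
    iteratedDeriv (n + 1) (fun y => ρ y * g y) x =
      iteratedDeriv (n + 1) ρ x * g x + ρ x * iteratedDeriv (n + 1) g x := by
  rw [iteratedDeriv_fun_mul (contDiff_infty.1 hρ _).contDiffAt (contDiff_infty.1 hg _).contDiffAt,
    Finset.sum_range_succ, Finset.sum_range_succ', Finset.sum_eq_zero]
  · simp only [Nat.choose_zero_right, Nat.choose_self, Nat.cast_one, one_mul, tsub_zero,
      tsub_self, iteratedDeriv_zero]
    ring
  intro i hi
  rw [hflat (n + 1 - (i + 1)) (by grind) (by grind)]
  simp

end IteratedDeriv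

section Slices

variable {X : ℝ × ℝ → Fin 3 → ℝ}

theorem vfD_apply_eq_deriv {p : ℝ × ℝ} (hX : DifferentiableAt ℝ X p) (i : Fin 3) :
    vfD (fun _ => ((1:ℝ), (0:ℝ))) X p i = deriv (fun r => X (r, p.2) i) p.1 := by
  have h : HasDerivAt (fun r => X (r, p.2)) (fderiv ℝ X p ((1:ℝ), (0:ℝ))) p.1 :=
    hX.hasFDerivAt.comp_hasDerivAt p.1 ((hasDerivAt_id p.1).prodMk (hasDerivAt_const p.1 p.2))
  exact (hasDerivAt_pi.mp h i).deriv.symm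

theorem pdV_apply_eq_deriv {p : ℝ × ℝ} (hX : DifferentiableAt ℝ X p) (i : Fin 3) :
    pdV X p i = deriv (fun t => X (p.1, t) i) p.2 := by
  have h : HasDerivAt (fun t => X (p.1, t)) (fderiv ℝ X p ((0:ℝ), (1:ℝ))) p.2 :=
    hX.hasFDerivAt.comp_hasDerivAt p.2 ((hasDerivAt_const p.2 p.1).prodMk (hasDerivAt_id p.2))
  exact (hasDerivAt_pi.mp h i).deriv.symm

theorem ContDiff.vfD (hX : ContDiff ℝ ∞ X) (v : ℝ × ℝ) : ContDiff ℝ ∞ (vfD (fun _ => v) X) :=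
  (hX.fderiv_right le_rfl).clm_apply contDiff_const

theorem vfDIter_apply_eq_iteratedDeriv (hX : ContDiff ℝ ∞ X) (n : ℕ) (p : ℝ × ℝ) (i : Fin 3) :
    vfDIter (fun _ => ((1:ℝ), (0:ℝ))) n X p i = iteratedDeriv n (fun r => X (r, p.2) i) p.1 := by
  induction n generalizing X with
  | zero => rfl
  | succ n ih =>
    rw [vfDIter, Function.iterate_succ_apply, ← vfDIter, ih (hX.vfD _), iteratedDeriv_succ']
    congr 1
    funext r
    exact vfD_apply_eq_deriv (hX.differentiable (by simp) _) i

end Slices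

def helicoidalSurface (lam Φ ρ : ℝ → ℝ) (h s : ℝ) (p : ℝ × ℝ) : Fin 3 → ℝ :=
  ![lam p.1 + h * (Φ p.1 - s * p.2),
    ρ p.1 * Real.cos (Φ p.1 - s * p.2),
    ρ p.1 * Real.sin (Φ p.1 - s * p.2)]

section Helicoidal

variable {lam Φ ρ : ℝ → ℝ} (h s : ℝ)

theorem contDiff_helicoidalSurface (hlam : ContDiff ℝ ∞ lam) (hΦ : ContDiff ℝ ∞ Φ)
    (hρ : ContDiff ℝ ∞ ρ) : ContDiff ℝ ∞ (helicoidalSurface lam Φ ρ h s) := by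
  refine contDiff_pi.2 fun i => ?_
  fin_cases i <;>
    simp only [helicoidalSurface, Fin.zero_eta, Fin.mk_one, Fin.reduceFinMk, Fin.isValue,
      Matrix.cons_val_zero, Matrix.cons_val_one, Matrix.cons_val] <;>
    fun_prop

theorem pdV_helicoidalSurface (hlam : ContDiff ℝ ∞ lam) (hΦ : ContDiff ℝ ∞ Φ)
    (hρ : ContDiff ℝ ∞ ρ) (x t : ℝ) :
    pdV (helicoidalSurface lam Φ ρ h s) (x, t) =
      ![-(h * s), ρ x * Real.sin (Φ x - s * t) * s, -(ρ x * Real.cos (Φ x - s * t) * s)] := by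
  ext i
  rw [pdV_apply_eq_deriv ((contDiff_helicoidalSurface h s hlam hΦ hρ).differentiable
    (by simp) _)]
  fin_cases i <;>
    simp (disch := fun_prop) only [helicoidalSurface, Fin.zero_eta, Fin.mk_one, Fin.reduceFinMk,
      Fin.isValue, Matrix.cons_val_zero, Matrix.cons_val_one, Matrix.cons_val, deriv_fun_add,
      deriv_fun_sub, deriv_fun_mul, deriv_const', deriv_const_mul_id', deriv_cos, deriv_sin] <;>
    ring

theorem vfDIter_helicoidalSurface (hlam : ContDiff ℝ ∞ lam) (hΦ : ContDiff ℝ ∞ Φ)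
    (hρ : ContDiff ℝ ∞ ρ) {x : ℝ} {n : ℕ}
    (hflat : ∀ j, 0 < j → j ≤ n → iteratedDeriv j Φ x = 0) (t : ℝ) :
    vfDIter (fun _ => ((1:ℝ), (0:ℝ))) (n + 1) (helicoidalSurface lam Φ ρ h s) (x, t) =
      ![iteratedDeriv (n + 1) lam x + h * iteratedDeriv (n + 1) Φ x,
        iteratedDeriv (n + 1) ρ x * Real.cos (Φ x - s * t)
          - ρ x * Real.sin (Φ x - s * t) * iteratedDeriv (n + 1) Φ x,
        iteratedDeriv (n + 1) ρ x * Real.sin (Φ x - s * t)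
          + ρ x * Real.cos (Φ x - s * t) * iteratedDeriv (n + 1) Φ x] := by
  set ψ : ℝ → ℝ := fun r => Φ r - s * t
  have hψ : ContDiff ℝ ∞ ψ := by fun_prop
  have hψ_succ (m : ℕ) : iteratedDeriv (m + 1) ψ x = iteratedDeriv (m + 1) Φ x := by
    rw [iteratedDeriv_succ_sub_const]
  have hψflat : ∀ j, 0 < j → j ≤ n → iteratedDeriv j ψ x = 0 := by
    intro j hj hjn
    obtain ⟨m, rfl⟩ : ∃ m, j = m + 1 := ⟨j - 1, by omega⟩
    rw [hψ_succ, hflat _ hj hjn]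
  have hcomp {f : ℝ → ℝ} (hf : ContDiff ℝ ∞ f) (m : ℕ) (hm : m ≤ n) :
      iteratedDeriv (m + 1) (f ∘ ψ) x = deriv f (ψ x) * iteratedDeriv (m + 1) Φ x := by
    rw [iteratedDeriv_comp_eq_of_flat hf hψ fun j hj hjm => hψflat j hj (hjm.trans hm), hψ_succ]
  have hcompflat {f : ℝ → ℝ} (hf : ContDiff ℝ ∞ f) :
      ∀ j, 0 < j → j ≤ n → iteratedDeriv j (f ∘ ψ) x = 0 := by
    intro j hj hjn
    obtain ⟨m, rfl⟩ : ∃ m, j = m + 1 := ⟨j - 1, by omega⟩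
    rw [hcomp hf m (by omega), hflat _ hj hjn, mul_zero]
  ext i
  rw [vfDIter_apply_eq_iteratedDeriv (contDiff_helicoidalSurface h s hlam hΦ hρ)]
  fin_cases i
  · show iteratedDeriv (n + 1) (fun r => lam r + h * ψ r) x =
      iteratedDeriv (n + 1) lam x + h * iteratedDeriv (n + 1) Φ x
    rw [iteratedDeriv_fun_add (contDiff_infty.1 hlam _).contDiffAt
      (contDiff_infty.1 (contDiff_const.mul hψ) _).contDiffAt, iteratedDeriv_const_mul_field,
      hψ_succ]
  · show iteratedDeriv (n + 1) (fun r => ρ r * (Real.cos ∘ ψ) r) x =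
      iteratedDeriv (n + 1) ρ x * Real.cos (ψ x) - ρ x * Real.sin (ψ x) * iteratedDeriv (n + 1) Φ x
    rw [iteratedDeriv_mul_eq_of_flat hρ (Real.contDiff_cos.comp hψ) (hcompflat Real.contDiff_cos),
      hcomp Real.contDiff_cos n le_rfl, Real.deriv_cos, Function.comp_apply]
    ring
  · show iteratedDeriv (n + 1) (fun r => ρ r * (Real.sin ∘ ψ) r) x =
      iteratedDeriv (n + 1) ρ x * Real.sin (ψ x) + ρ x * Real.cos (ψ x) * iteratedDeriv (n + 1) Φ x
    rw [iteratedDeriv_mul_eq_of_flat hρ (Real.contDiff_sin.comp hψ) (hcompflat Real.contDiff_sin),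
      hcomp Real.contDiff_sin n le_rfl, Real.deriv_sin, Function.comp_apply]
    ring

theorem det3_pdV_vfDIter_helicoidalSurface_eq_zero (hlam : ContDiff ℝ ∞ lam) (hΦ : ContDiff ℝ ∞ Φ)
    (hρ : ContDiff ℝ ∞ ρ) {x : ℝ} (hlam2 : iteratedDeriv 2 lam x = 0)
    (hlam3 : iteratedDeriv 3 lam x = 0) (hΦ1 : iteratedDeriv 1 Φ x = 0)
    (hΦ2 : iteratedDeriv 2 Φ x = 0) (t : ℝ) :
    det3 (pdV (helicoidalSurface lam Φ ρ h s) (x, t))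
      (vfDIter (fun _ => ((1:ℝ), (0:ℝ))) 2 (helicoidalSurface lam Φ ρ h s) (x, t))
      (vfDIter (fun _ => ((1:ℝ), (0:ℝ))) 3 (helicoidalSurface lam Φ ρ h s) (x, t)) = 0 := by
  have hflat1 : ∀ j, 0 < j → j ≤ 1 → iteratedDeriv j Φ x = 0 := by
    intro j hj hj1
    obtain rfl : j = 1 := by omega
    exact hΦ1
  have hflat2 : ∀ j, 0 < j → j ≤ 2 → iteratedDeriv j Φ x = 0 := by
    intro j hj hj2
    interval_cases j <;> assumption
  rw [pdV_helicoidalSurface h s hlam hΦ hρ, vfDIter_helicoidalSurface h s hlam hΦ hρ hflat1,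
    vfDIter_helicoidalSurface h s hlam hΦ hρ hflat2, hlam2, hlam3, hΦ2]
  simp only [det3, Matrix.det_fin_three, Matrix.of_apply, Matrix.cons_val', Matrix.cons_val_zero,
    Matrix.cons_val_one, Matrix.cons_val, Matrix.cons_val_fin_one, Fin.isValue]
  ring

end Helicoidal

section Primitive

variable {g : ℝ → ℝ}

theorem contDiff_primitive (hg : ContDiff ℝ ∞ g) (a : ℝ) :
    ContDiff ℝ ∞ fun x => ∫ τ in a..x, g τ := by
  have hderiv : deriv (fun x => ∫ τ in a..x, g τ) = g :=
    funext (Continuous.deriv_integral g hg.continuous a)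
  refine contDiff_infty_iff_deriv.2
    ⟨intervalIntegral.differentiable_integral_of_continuous hg.continuous, ?_⟩
  rwa [hderiv]

theorem iteratedDeriv_succ_primitive_pow_mul_eq_zero (hg : ContDiff ℝ ∞ g) {m n : ℕ}
    (hmn : m < n) : iteratedDeriv (m + 1) (fun x => ∫ τ in (0:ℝ)..x, τ ^ n * g τ) 0 = 0 := by
  have hderiv : deriv (fun x => ∫ τ in (0:ℝ)..x, τ ^ n * g τ) = fun x => x ^ n * g x :=
    funext (Continuous.deriv_integral _ ((continuous_pow n).mul hg.continuous) 0)
  rw [iteratedDeriv_succ', hderiv]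
  exact iteratedDeriv_pow_mul_eq_zero (contDiff_infty.1 hg m).contDiffAt hmn

end Primitive

section Delaunay

variable {k : ℝ}

theorem δT_pos (hk : -1 < k) (hk' : k ≠ 1) (r : ℝ) : 0 < δT k r := by
  have : 0 < (k - 1) ^ 2 := by positivity [sub_ne_zero.mpr hk']
  unfold δT
  nlinarith [sq_nonneg r]

theorem ΔT_pos (hk : -1 < k) (hk' : k ≠ 1) (r : ℝ) : 0 < ΔT k r := by
  have : 0 < (1 - k) ^ 2 := by positivity [sub_ne_zero.mpr hk'.symm]
  unfold ΔT
  nlinarith [sq_nonneg r]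

theorem contDiff_sqrt_ΔT (hk : -1 < k) (hk' : k ≠ 1) :
    ContDiff ℝ ∞ fun r => Real.sqrt (ΔT k r) :=
  (by unfold ΔT; fun_prop : ContDiff ℝ ∞ (ΔT k)).sqrt fun r => (ΔT_pos hk hk' r).ne'

theorem contDiff_inv_sqrt_δT_mul_ΔT (hk : -1 < k) (hk' : k ≠ 1) :
    ContDiff ℝ ∞ fun r => (Real.sqrt (δT k r) * ΔT k r)⁻¹ := by
  have hδ : ContDiff ℝ ∞ fun r => Real.sqrt (δT k r) :=
    (by unfold δT; fun_prop : ContDiff ℝ ∞ (δT k)).sqrt fun r => (δT_pos hk hk' r).ne'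
  refine (hδ.mul (by unfold ΔT; fun_prop)).inv fun r => ?_
  have := Real.sqrt_pos.2 (δT_pos hk hk' r)
  have := ΔT_pos hk hk' r
  positivity

def ΦT (k r : ℝ) : ℝ :=
  ∫ τ in (0:ℝ)..r, Real.sqrt (2 * (1 + k)) * (1 - k) * τ ^ 2 / (Real.sqrt (δT k τ) * ΔT k τ)

theorem XT_eq_helicoidalSurface (H : ℝ) :
    XT H k = helicoidalSurface (lamT H k) (ΦT k) (ρT H k) (hT H k) (Real.sqrt ((1 + k) / 2)) :=
  rfl

theorem lamT_eq_primitive (H : ℝ) :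
    lamT H k = fun x => ∫ τ in (0:ℝ)..x,
      τ ^ 4 * (Real.sqrt (2 * (1 + k)) / H * (Real.sqrt (δT k τ) * ΔT k τ)⁻¹) := by
  funext x
  unfold lamT
  congr 1
  funext τ
  ring

theorem ΦT_eq_primitive :
    ΦT k = fun x => ∫ τ in (0:ℝ)..x,
      τ ^ 2 * (Real.sqrt (2 * (1 + k)) * (1 - k) * (Real.sqrt (δT k τ) * ΔT k τ)⁻¹) := by
  funext x
  unfold ΦT
  congr 1
  funext τ
  ring

theorem contDiff_lamT (hk : -1 < k) (hk' : k ≠ 1) (H : ℝ) : ContDiff ℝ ∞ (lamT H k) := by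
  rw [lamT_eq_primitive]
  exact contDiff_primitive ((contDiff_id.pow 4).mul
    (contDiff_const.mul (contDiff_inv_sqrt_δT_mul_ΔT hk hk'))) 0

theorem contDiff_ΦT (hk : -1 < k) (hk' : k ≠ 1) : ContDiff ℝ ∞ (ΦT k) := by
  rw [ΦT_eq_primitive]
  exact contDiff_primitive ((contDiff_id.pow 2).mul
    (contDiff_const.mul (contDiff_inv_sqrt_δT_mul_ΔT hk hk'))) 0

theorem contDiff_ρT (hk : -1 < k) (hk' : k ≠ 1) (H : ℝ) : ContDiff ℝ ∞ (ρT H k) :=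
  (contDiff_sqrt_ΔT hk hk').div_const _

theorem iteratedDeriv_lamT_eq_zero (hk : -1 < k) (hk' : k ≠ 1) (H : ℝ) {m : ℕ} (hm : m < 4) :
    iteratedDeriv (m + 1) (lamT H k) 0 = 0 := by
  rw [lamT_eq_primitive]
  exact iteratedDeriv_succ_primitive_pow_mul_eq_zero
    (contDiff_const.mul (contDiff_inv_sqrt_δT_mul_ΔT hk hk')) hm

theorem iteratedDeriv_ΦT_eq_zero (hk : -1 < k) (hk' : k ≠ 1) {m : ℕ} (hm : m < 2) :
    iteratedDeriv (m + 1) (ΦT k) 0 = 0 := by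
  rw [ΦT_eq_primitive]
  exact iteratedDeriv_succ_primitive_pow_mul_eq_zero
    (contDiff_const.mul (contDiff_inv_sqrt_δT_mul_ΔT hk hk')) hm

end Delaunay

theorem conj_delaunay_timelike_condition3_general (H k : ℝ)
    (hk : -1 < k) (hk' : k ≠ 1) :
    ∀ t : ℝ,
      det3 (pdV (XT H k) ((0:ℝ), t))
        (vfDIter (fun _ => ((1:ℝ), (0:ℝ))) 2 (XT H k) ((0:ℝ), t))
        (vfDIter (fun _ => ((1:ℝ), (0:ℝ))) 3 (XT H k) ((0:ℝ), t)) = 0 := by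
  rw [XT_eq_helicoidalSurface]
  exact det3_pdV_vfDIter_helicoidalSurface_eq_zero _ _ (contDiff_lamT hk hk' H) (contDiff_ΦT hk hk')
    (contDiff_ρT hk hk' H) (iteratedDeriv_lamT_eq_zero hk hk' H (by norm_num))
    (iteratedDeriv_lamT_eq_zero hk hk' H (by norm_num))
    (iteratedDeriv_ΦT_eq_zero hk hk' (by norm_num)) (iteratedDeriv_ΦT_eq_zero hk hk' (by norm_num))

/-- Along the singular curve `{r = 0}` of the conjugate of a spacelike Delaunay surface
with timelike axis, `det(X_t, X_rr, X_rrr) = 0`. -/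
theorem conj_delaunay_timelike_condition3 (H k : ℝ) (hH : H ≠ 0)
    (hk : -1 < k) (hk' : k ≠ 1) :
    ∀ t : ℝ,
      det3 (pdV (XT H k) ((0:ℝ), t))
        (vfDIter (fun _ => ((1:ℝ), (0:ℝ))) 2 (XT H k) ((0:ℝ), t))
        (vfDIter (fun _ => ((1:ℝ), (0:ℝ))) 3 (XT H k) ((0:ℝ), t)) = 0 :=
  conj_delaunay_timelike_condition3_general H k hk hk'
end
end
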